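/- arXiv:1805.05012 — 5 statements merged into one kernel-verified Lean document; each statement's English description precedes it below -/
import Mathlib

section
/- For every integer n ≥ 1 with F(n) > 0, the function t ↦ R(t,n) is differentiable on [0,∞) and satisfies the recursive linear ODE (1/λ) ∂R(t,n)/∂t = −(∑_{i=1}^{n} F(i)) R(t,n) + 2 ∑_{i=1}^{n−1} F(n−i) R(t,i), with boundary condition R(0,n) = n; and if F(n) = 0 then R(t,n) = n satisfies the same equation trivially (all coefficients vanish). -/
open Finset MeasureTheory intervalIntegral Real Filter

noncomputable section

/-- The CDF `F(k) = ∑_{j=1}^k f(j)` of the bundle-size pmf `f`. -/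
def cdfF (f : ℕ → ℝ) (k : ℕ) : ℝ := ∑ j ∈ Finset.Icc 1 k, f j

/-- `R(t,n)`: the expected number of remaining packages at time `t` starting from `n`
packages on a line, given via its closed-form solution in terms of the constants `γ`. -/
def Rfun (f : ℕ → ℝ) (γ : ℕ → ℕ → ℝ) (lam t : ℝ) (n : ℕ) : ℝ :=
  if 0 < cdfF f n then
    ∑ i ∈ Finset.Icc 1 n, γ n i * Real.exp (-(lam * ∑ j ∈ Finset.Icc 1 i, cdfF f j) * t)
  else (n : ℝ)

/-- `K(t,n) = n - R(t,n)`. -/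
def Kfun (f : ℕ → ℝ) (γ : ℕ → ℕ → ℝ) (lam t : ℝ) (n : ℕ) : ℝ :=
  (n : ℝ) - Rfun f γ lam t n

/-!
Write `S_i = ∑_{j ≤ i} F(j)` and `e_i = exp (-λ S_i t)`. Differentiating the closed form gives
`∑_i γ_{n,i} (-λ S_i) e_i`. Substituting the closed forms of `R(t,i)`, `i < n`, into the convolution
term and exchanging the order of summation, the coefficient of `e_j` becomes
`2 ∑_k F(k) γ_{n-k,j}`, which the recursion for `γ` turns into `γ_{n,j} (S_n - S_j)`; then both sides
of the equation agree term by term. The diagonal condition on `γ_{n,n}` is exactly `R(0,n) = n`.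
-/

/-- The decay rate `∑_{j=1}^i F(j)` of the `i`-th exponential in `R(t,n)` (up to the factor `λ`). -/
def cdfSum (f : ℕ → ℝ) (i : ℕ) : ℝ := ∑ j ∈ Icc 1 i, cdfF f j

theorem ne_zero_of_cdfF_pos {f : ℕ → ℝ} {n : ℕ} (h : 0 < cdfF f n) : n ≠ 0 := by
  rintro rfl
  simp [cdfF] at h

theorem cdfSum_sub_cdfSum (f : ℕ → ℝ) {j n : ℕ} (h : j ≤ n) :
    cdfSum f n - cdfSum f j = ∑ k ∈ Icc (j + 1) n, cdfF f k := by
  have h := sum_Ioc_consecutive (cdfF f) (Nat.zero_le j) h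
  simp only [cdfSum, ← Icc_add_one_left_eq_Ioc, zero_add] at h ⊢
  linarith

theorem sum_Icc_one_eq_sum_Icc_sub_one_add {M : Type*} [AddCommMonoid M] {n : ℕ} (hn : n ≠ 0)
    (g : ℕ → M) :
    ∑ i ∈ Icc 1 n, g i = ∑ i ∈ Icc 1 (n - 1), g i + g n := by
  obtain ⟨k, rfl⟩ := Nat.exists_eq_succ_of_ne_zero hn
  exact sum_Icc_succ_top (by omega) g

theorem sum_Icc_reflect {M : Type*} [AddCommMonoid M] {n j : ℕ} (hj : 1 ≤ j) (g : ℕ → ℕ → M) :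
    ∑ i ∈ Icc j (n - 1), g (n - i) i = ∑ k ∈ Icc 1 (n - j), g k (n - k) := by
  apply sum_nbij' (fun i => n - i) (fun k => n - k) <;> intro i hi <;>
    simp only [mem_Icc] at hi ⊢
  all_goals try omega
  rw [Nat.sub_sub_self (by omega)]

theorem Rfun_at_zero {f : ℕ → ℝ} {γ : ℕ → ℕ → ℝ} (lam : ℝ)
    (hγ_diag : ∀ n : ℕ, 0 < cdfF f n → γ n n = (n : ℝ) - ∑ i ∈ Icc 1 (n - 1), γ n i) (n : ℕ) :
    Rfun f γ lam 0 n = n := by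
  unfold Rfun
  split_ifs with hpos
  · simp only [mul_zero, exp_zero, mul_one,
      sum_Icc_one_eq_sum_Icc_sub_one_add (ne_zero_of_cdfF_pos hpos),
      hγ_diag n hpos]
    ring
  · rfl

theorem Rfun_of_cdfF_eq_zero {f : ℕ → ℝ} {γ : ℕ → ℕ → ℝ} {lam t : ℝ} {n : ℕ}
    (hn : cdfF f n = 0) : Rfun f γ lam t n = n := by
  simp [Rfun, hn]

section

variable {f : ℕ → ℝ} (hf : ∀ k, 0 ≤ f k)
include hf

theorem cdfF_nonneg (k : ℕ) : 0 ≤ cdfF f k :=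
  sum_nonneg fun j _ => hf j

theorem cdfF_mono : Monotone (cdfF f) := fun _ _ h =>
  sum_le_sum_of_subset_of_nonneg (Icc_subset_Icc_right h) fun i _ _ => hf i

theorem cdfF_eq_zero_of_le {n k : ℕ} (hn : cdfF f n = 0) (hk : k ≤ n) : cdfF f k = 0 :=
  le_antisymm (hn ▸ cdfF_mono hf hk) (cdfF_nonneg hf k)

theorem cdfSum_eq_zero_of_le {n i : ℕ} (hn : cdfF f n = 0) (hi : i ≤ n) : cdfSum f i = 0 :=
  sum_eq_zero fun _ hk => cdfF_eq_zero_of_le hf hn ((mem_Icc.mp hk).2.trans hi)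

theorem hasDerivAt_Rfun_of_cdfF_eq_zero {γ : ℕ → ℕ → ℝ} {lam : ℝ} {n : ℕ}
    (hn : cdfF f n = 0) (t : ℝ) :
    HasDerivAt (fun s => Rfun f γ lam s n)
      (lam * (-(∑ i ∈ Icc 1 n, cdfF f i) * Rfun f γ lam t n
        + 2 * ∑ i ∈ Icc 1 (n - 1), cdfF f (n - i) * Rfun f γ lam t i)) t := by
  have hsum : ∑ i ∈ Icc 1 n, cdfF f i = 0 := cdfSum_eq_zero_of_le hf hn le_rfl
  have hconv : ∑ i ∈ Icc 1 (n - 1), cdfF f (n - i) * Rfun f γ lam t i = 0 :=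
    sum_eq_zero fun i _ => by rw [cdfF_eq_zero_of_le hf hn (Nat.sub_le n i), zero_mul]
  simpa [hsum, hconv, funext fun s => Rfun_of_cdfF_eq_zero (γ := γ) (lam := lam) (t := s) hn]
    using hasDerivAt_const t (n : ℝ)

variable {γ : ℕ → ℕ → ℝ}
  (hγ_rec : ∀ n i : ℕ, 0 < cdfF f n → 1 ≤ i → i < n →
    γ n i = 2 * (∑ j ∈ Icc 1 (n - i), cdfF f j * γ (n - j) i) /
      (∑ k ∈ Icc (i + 1) n, cdfF f k))

include hγ_rec in
/-- The recursion for `γ`, cleared of its denominator `∑_{k=i+1}^n F(k) ≥ F(n) > 0`. -/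
theorem two_mul_sum_cdfF_mul_γ {n j : ℕ} (hpos : 0 < cdfF f n) (hj : 1 ≤ j) (hjn : j < n) :
    2 * ∑ k ∈ Icc 1 (n - j), cdfF f k * γ (n - k) j = γ n j * (cdfSum f n - cdfSum f j) := by
  have hden : 0 < ∑ k ∈ Icc (j + 1) n, cdfF f k :=
    hpos.trans_le <| single_le_sum (fun k _ => cdfF_nonneg hf k) (mem_Icc.mpr ⟨hjn, le_rfl⟩)
  rw [cdfSum_sub_cdfSum f hjn.le, hγ_rec n j hpos hj hjn, div_mul_cancel₀ _ hden.ne']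

variable (hγ_zero : ∀ n j : ℕ, cdfF f n = 0 → 1 ≤ j → j ≤ n → γ n j = 1)
include hγ_zero

/-- The closed form also holds when `F(n) = 0`: then all rates vanish and all `γ n i = 1`. -/
theorem Rfun_eq_sum (lam t : ℝ) (n : ℕ) :
    Rfun f γ lam t n = ∑ i ∈ Icc 1 n, γ n i * exp (-(lam * cdfSum f i) * t) := by
  unfold Rfun
  split_ifs with hpos
  · rfl
  have hn : cdfF f n = 0 := le_antisymm (not_lt.mp hpos) (cdfF_nonneg hf n)
  rw [sum_congr rfl fun i hi => by
    rw [hγ_zero n i hn (mem_Icc.mp hi).1 (mem_Icc.mp hi).2,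
      cdfSum_eq_zero_of_le hf hn (mem_Icc.mp hi).2]]
  simp

theorem hasDerivAt_Rfun (lam t : ℝ) (n : ℕ) :
    HasDerivAt (fun s => Rfun f γ lam s n)
      (∑ i ∈ Icc 1 n, γ n i * (-(lam * cdfSum f i) * exp (-(lam * cdfSum f i) * t))) t := by
  simp only [Rfun_eq_sum hf hγ_zero]
  refine HasDerivAt.fun_sum fun i _ => HasDerivAt.const_mul _ ?_
  simpa [mul_comm] using ((hasDerivAt_id t).const_mul (-(lam * cdfSum f i))).exp

include hγ_rec

theorem two_mul_sum_cdfF_mul_Rfun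
    (lam t : ℝ) {n : ℕ} (hpos : 0 < cdfF f n) :
    2 * ∑ i ∈ Icc 1 (n - 1), cdfF f (n - i) * Rfun f γ lam t i =
      ∑ j ∈ Icc 1 (n - 1),
        γ n j * (cdfSum f n - cdfSum f j) * exp (-(lam * cdfSum f j) * t) := by
  set e : ℕ → ℝ := fun j => exp (-(lam * cdfSum f j) * t)
  calc 2 * ∑ i ∈ Icc 1 (n - 1), cdfF f (n - i) * Rfun f γ lam t i
      = ∑ i ∈ Icc 1 (n - 1), ∑ j ∈ Icc 1 i, 2 * (cdfF f (n - i) * γ i j) * e j := by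
        simp only [mul_sum, Rfun_eq_sum hf hγ_zero, mul_assoc, e]
    _ = ∑ j ∈ Icc 1 (n - 1), ∑ i ∈ Icc j (n - 1), 2 * (cdfF f (n - i) * γ i j) * e j :=
        sum_comm' fun i j => by simp only [mem_Icc]; omega
    _ = ∑ j ∈ Icc 1 (n - 1), γ n j * (cdfSum f n - cdfSum f j) * e j := by
        refine sum_congr rfl fun j hj => ?_
        obtain ⟨hj1, hjn⟩ := mem_Icc.mp hj
        rw [← sum_mul, ← mul_sum, sum_Icc_reflect hj1 fun k i => cdfF f k * γ i j,
          two_mul_sum_cdfF_mul_γ hf hγ_rec (n := n) hpos hj1 (by omega)]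

theorem hasDerivAt_Rfun_of_pos
    (lam t : ℝ) {n : ℕ} (hpos : 0 < cdfF f n) :
    HasDerivAt (fun s => Rfun f γ lam s n)
      (lam * (-(∑ i ∈ Icc 1 n, cdfF f i) * Rfun f γ lam t n
        + 2 * ∑ i ∈ Icc 1 (n - 1), cdfF f (n - i) * Rfun f γ lam t i)) t := by
  convert hasDerivAt_Rfun hf hγ_zero lam t n using 1
  have hn := ne_zero_of_cdfF_pos hpos
  set e : ℕ → ℝ := fun j => exp (-(lam * cdfSum f j) * t)
  have hlow : lam * (-cdfSum f n * ∑ j ∈ Icc 1 (n - 1), γ n j * e j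
      + ∑ j ∈ Icc 1 (n - 1), γ n j * (cdfSum f n - cdfSum f j) * e j) =
      ∑ j ∈ Icc 1 (n - 1), γ n j * (-(lam * cdfSum f j) * e j) := by
    simp only [mul_add, mul_sum, ← sum_add_distrib]
    exact sum_congr rfl fun j _ => by ring
  rw [two_mul_sum_cdfF_mul_Rfun hf hγ_rec hγ_zero lam t hpos, Rfun_eq_sum hf hγ_zero,
    show ∑ i ∈ Icc 1 n, cdfF f i = cdfSum f n from rfl,
    sum_Icc_one_eq_sum_Icc_sub_one_add hn, sum_Icc_one_eq_sum_Icc_sub_one_add hn]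
  linear_combination hlow

end

theorem stmt_0_general
    (f : ℕ → ℝ)
    (hf_nonneg : ∀ k, 0 ≤ f k)
    (lam : ℝ)
    (γ : ℕ → ℕ → ℝ)
    (hγ_zero : ∀ n j : ℕ, cdfF f n = 0 → 1 ≤ j → j ≤ n → γ n j = 1)
    (hγ_rec : ∀ n i : ℕ, 0 < cdfF f n → 1 ≤ i → i < n →
      γ n i = 2 * (∑ j ∈ Finset.Icc 1 (n - i), cdfF f j * γ (n - j) i) /
        (∑ k ∈ Finset.Icc (i + 1) n, cdfF f k))
    (hγ_diag : ∀ n : ℕ, 0 < cdfF f n →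
      γ n n = (n : ℝ) - ∑ i ∈ Finset.Icc 1 (n - 1), γ n i)
    (n : ℕ) :
    (0 < cdfF f n →
      (∀ t : ℝ, 0 ≤ t →
        HasDerivAt (fun s => Rfun f γ lam s n)
          (lam * (-(∑ i ∈ Finset.Icc 1 n, cdfF f i) * Rfun f γ lam t n
            + 2 * ∑ i ∈ Finset.Icc 1 (n - 1), cdfF f (n - i) * Rfun f γ lam t i)) t)
      ∧ Rfun f γ lam 0 n = (n : ℝ))
    ∧ (cdfF f n = 0 →
      (∀ t : ℝ, 0 ≤ t → Rfun f γ lam t n = (n : ℝ))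
      ∧ (∀ t : ℝ, 0 ≤ t →
        HasDerivAt (fun s => Rfun f γ lam s n)
          (lam * (-(∑ i ∈ Finset.Icc 1 n, cdfF f i) * Rfun f γ lam t n
            + 2 * ∑ i ∈ Finset.Icc 1 (n - 1), cdfF f (n - i) * Rfun f γ lam t i)) t)) :=
  ⟨fun hpos =>
    ⟨fun t _ => hasDerivAt_Rfun_of_pos hf_nonneg hγ_rec hγ_zero lam t hpos,
      Rfun_at_zero lam hγ_diag n⟩,
    fun hzero =>
    ⟨fun _ _ => Rfun_of_cdfF_eq_zero hzero,
      fun t _ => hasDerivAt_Rfun_of_cdfF_eq_zero hf_nonneg hzero t⟩⟩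

/-- For every `n ≥ 1` with `F(n) > 0`, `t ↦ R(t,n)` is differentiable on
`[0,∞)` and satisfies `(1/λ) ∂R(t,n)/∂t = -(∑_{i=1}^n F(i)) R(t,n) + 2 ∑_{i=1}^{n-1} F(n-i) R(t,i)`
with `R(0,n) = n`; and if `F(n) = 0` then `R(t,n) = n` satisfies the same equation trivially. -/
theorem stmt_0
    (m : ℕ) (hm : 1 ≤ m) (f : ℕ → ℝ)
    (hf_nonneg : ∀ k, 0 ≤ f k)
    (hf_sum : ∑ k ∈ Finset.Icc 1 m, f k = 1)
    (hf_supp : ∀ k : ℕ, k = 0 ∨ m < k → f k = 0)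
    (lam : ℝ) (hlam : 0 < lam)
    (γ : ℕ → ℕ → ℝ)
    (hγ_zero : ∀ n j : ℕ, cdfF f n = 0 → 1 ≤ j → j ≤ n → γ n j = 1)
    (hγ_rec : ∀ n i : ℕ, 0 < cdfF f n → 1 ≤ i → i < n →
      γ n i = 2 * (∑ j ∈ Finset.Icc 1 (n - i), cdfF f j * γ (n - j) i) /
        (∑ k ∈ Finset.Icc (i + 1) n, cdfF f k))
    (hγ_diag : ∀ n : ℕ, 0 < cdfF f n →
      γ n n = (n : ℝ) - ∑ i ∈ Finset.Icc 1 (n - 1), γ n i)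
    (n : ℕ) (hn : 1 ≤ n) :
    (0 < cdfF f n →
      (∀ t : ℝ, 0 ≤ t →
        HasDerivAt (fun s => Rfun f γ lam s n)
          (lam * (-(∑ i ∈ Finset.Icc 1 n, cdfF f i) * Rfun f γ lam t n
            + 2 * ∑ i ∈ Finset.Icc 1 (n - 1), cdfF f (n - i) * Rfun f γ lam t i)) t)
      ∧ Rfun f γ lam 0 n = (n : ℝ))
    ∧ (cdfF f n = 0 →
      (∀ t : ℝ, 0 ≤ t → Rfun f γ lam t n = (n : ℝ))
      ∧ (∀ t : ℝ, 0 ≤ t →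
        HasDerivAt (fun s => Rfun f γ lam s n)
          (lam * (-(∑ i ∈ Finset.Icc 1 n, cdfF f i) * Rfun f γ lam t n
            + 2 * ∑ i ∈ Finset.Icc 1 (n - 1), cdfF f (n - i) * Rfun f γ lam t i)) t)) :=
  stmt_0_general f hf_nonneg lam γ hγ_zero hγ_rec hγ_diag n
end
end

section
/- Suppose f(m) = 1 (so F(i) = 0 for i < m and m > 1). Then for every λ > 0, lim_{t→∞} α(t,λ) = m ∫_{0}^{1} e^{2(φ(u) − φ(1))} du, where in this case φ(y) = ∑_{j=1}^{m−1} y^j / j; equivalently the limit equals m e^{−2∑_{j=1}^{m−1} 1/j} ∫_0^1 e^{2∑_{j=1}^{m−1} u^j/j} du. -/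
open Finset MeasureTheory intervalIntegral Real Filter

noncomputable section

/-- `φ(y) = ∑_{i=1}^{m-1} ((1-F(i))/i) y^i`. -/
def phiF (f : ℕ → ℝ) (m : ℕ) (y : ℝ) : ℝ :=
  ∑ i ∈ Finset.Icc 1 (m - 1), ((1 - cdfF f i) / (i : ℝ)) * y ^ i

/-- `φ'(y) = ∑_{i=1}^{m-1} (1-F(i)) y^(i-1)` (so `φ'(1) = ∑_{i=1}^{m-1} (1-F(i))`). -/
def phiDeriv (f : ℕ → ℝ) (m : ℕ) (y : ℝ) : ℝ :=
  ∑ i ∈ Finset.Icc 1 (m - 1), (1 - cdfF f i) * y ^ (i - 1)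

/-- `q̂(s,v)`. -/
def qhat (f : ℕ → ℝ) (γ : ℕ → ℕ → ℝ) (lam : ℝ) (m : ℕ) (s v : ℝ) : ℝ :=
  2 * v ^ ((m : ℝ) - phiDeriv f m 1 - 1) * (1 - v) *
      (∑ i ∈ Finset.Icc 1 (m - 1), Rfun f γ lam s i)
  - 2 * (1 - v) ^ 2 *
      ∑ i ∈ Finset.Icc 1 (m - 1), Rfun f γ lam s i *
        ∑ j ∈ Finset.Icc (m - i) (m - 1),
          (1 - cdfF f j) * v ^ ((i : ℝ) + (j : ℝ) - phiDeriv f m 1 - 1)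

/-- `α(t,λ)`, the asymptotic proportion of delivered packages by time `t`. -/
def alphaF (f : ℕ → ℝ) (γ : ℕ → ℕ → ℝ) (lam : ℝ) (m : ℕ) (t : ℝ) : ℝ :=
  1 - (∫ u in Real.exp (-(lam * t))..1,
        Real.exp (2 * (phiF f m u - phiF f m 1)) * qhat f γ lam m (t + Real.log u / lam) u)
    - ((m : ℝ) - ((m : ℝ) - 1) * Real.exp (-(lam * t))) *
        Real.exp (2 * (phiF f m (Real.exp (-(lam * t))) - phiF f m 1)
          - lam * t * ((m : ℝ) - phiDeriv f m 1))

/-!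
When `f` is the point mass at `m = n + 1`, the CDF vanishes below `m`, so
`φ(u) = ∑_{j ≤ n} u^j / j`, `φ'(1) = n`, `R(s, i) = i` for `i < m`, and
`q̂(s, u) = 2 (1 - u) ∑_{i ≤ n} i u^i` does not depend on `s`.
For `w(u) = e^{2(φ(u) - φ(1))}` one has
`d/du [((n + 1) u - n u²) w(u)] = w(u) ((n + 1) + q̂(u))`, so integrating from `v = e^{-λt}`
to `1` cancels the boundary term of `α`, leaving `α(t, λ) = m ∫_v^1 w`; the limit `t → ∞`
is then continuity of the primitive at `0`.
-/

def logSeries (n : ℕ) (u : ℝ) : ℝ := ∑ j ∈ Icc 1 n, u ^ j / j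

def logSeriesWeight (n : ℕ) (u : ℝ) : ℝ := exp (2 * (logSeries n u - logSeries n 1))

lemma sum_Icc_one_eq_sum_range {M : Type*} [AddCommMonoid M] (n : ℕ) (g : ℕ → M) :
    ∑ i ∈ Icc 1 n, g i = ∑ k ∈ range n, g (k + 1) := by
  rw [← Ico_add_one_right_eq_Icc, sum_Ico_eq_sum_range]
  simp [add_comm]

lemma add_one_sub_mul_mul_geom_sum (n : ℕ) (u : ℝ) :
    ((n + 1) - n * u) * u * ∑ k ∈ range n, u ^ k - n * u
      = (1 - u) * ∑ i ∈ Icc 1 n, (i : ℝ) * u ^ i := by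
  induction n with
  | zero => simp
  | succ n ih =>
    rw [sum_range_succ, sum_Icc_succ_top (by omega)]
    push_cast
    linear_combination ih + u * mul_neg_geom_sum u n

lemma hasDerivAt_logSeries (n : ℕ) (u : ℝ) :
    HasDerivAt (logSeries n) (∑ k ∈ range n, u ^ k) u := by
  have hterm (j : ℕ) (hj : j ∈ Icc 1 n) :
      HasDerivAt (fun u : ℝ ↦ u ^ j / j) (u ^ (j - 1)) u := by
    have hj0 : (j : ℝ) ≠ 0 := Nat.cast_ne_zero.2 (by have := (mem_Icc.1 hj).1; omega)
    simpa [hj0] using (hasDerivAt_pow j u).div_const (j : ℝ)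
  have hsum := HasDerivAt.fun_sum hterm
  rwa [sum_Icc_one_eq_sum_range n (fun j ↦ u ^ (j - 1))] at hsum

lemma continuous_logSeriesWeight (n : ℕ) : Continuous (logSeriesWeight n) := by
  unfold logSeriesWeight logSeries
  fun_prop

lemma logSeriesWeight_one (n : ℕ) : logSeriesWeight n 1 = 1 := by
  simp [logSeriesWeight]

lemma logSeriesWeight_eq (n : ℕ) (u : ℝ) :
    logSeriesWeight n u
      = exp (-2 * ∑ j ∈ Icc 1 n, 1 / (j : ℝ)) * exp (2 * logSeries n u) := by
  rw [logSeriesWeight, ← exp_add]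
  simp [logSeries]
  ring

lemma hasDerivAt_mul_logSeriesWeight (n : ℕ) (u : ℝ) :
    HasDerivAt (fun u ↦ ((n + 1) * u - n * u ^ 2) * logSeriesWeight n u)
      (logSeriesWeight n u * ((n + 1) + 2 * (1 - u) * ∑ i ∈ Icc 1 n, (i : ℝ) * u ^ i)) u := by
  have hpoly : HasDerivAt (fun u : ℝ ↦ (n + 1) * u - n * u ^ 2) ((n + 1) - n * (2 * u)) u := by
    simpa using ((hasDerivAt_id u).const_mul ((n : ℝ) + 1)).fun_sub
      ((hasDerivAt_pow 2 u).const_mul (n : ℝ))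
  have hweight : HasDerivAt (logSeriesWeight n)
      (logSeriesWeight n u * (2 * ∑ k ∈ range n, u ^ k)) u :=
    (((hasDerivAt_logSeries n u).sub_const _).const_mul 2).exp
  refine (hpoly.mul hweight).congr_deriv ?_
  linear_combination 2 * logSeriesWeight n u * add_one_sub_mul_mul_geom_sum n u

lemma integral_logSeriesWeight_mul (n : ℕ) (v : ℝ) :
    ∫ u in v..1, logSeriesWeight n u * (2 * (1 - u) * ∑ i ∈ Icc 1 n, (i : ℝ) * u ^ i)
      = 1 - ((n + 1) * v - n * v ^ 2) * logSeriesWeight n v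
          - (n + 1) * ∫ u in v..1, logSeriesWeight n u := by
  have hW := continuous_logSeriesWeight n
  have hWQ : Continuous fun u ↦
      logSeriesWeight n u * (2 * (1 - u) * ∑ i ∈ Icc 1 n, (i : ℝ) * u ^ i) := by
    fun_prop
  have hftc := integral_eq_sub_of_hasDerivAt
    (fun u _ ↦ (hasDerivAt_mul_logSeriesWeight n u).congr_deriv (mul_add _ _ _))
    (((hW.mul_const _).add hWQ).intervalIntegrable v 1)
  rw [integral_add ((hW.mul_const _).intervalIntegrable v 1) (hWQ.intervalIntegrable v 1),
    intervalIntegral.integral_mul_const, logSeriesWeight_one] at hftc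
  linear_combination hftc

lemma tendsto_integral_exp_neg_mul_atTop {g : ℝ → ℝ} (hg : Continuous g) {lam : ℝ}
    (hlam : 0 < lam) :
    Tendsto (fun t ↦ ∫ u in exp (-(lam * t))..1, g u) atTop
      (nhds (∫ u in (0 : ℝ)..1, g u)) := by
  have hexp : Tendsto (fun t ↦ exp (-(lam * t))) atTop (nhds 0) :=
    tendsto_exp_atBot.comp (tendsto_neg_atTop_atBot.comp (tendsto_id.const_mul_atTop hlam))
  have hprim : Continuous fun v ↦ ∫ u in v..1, g u := by
    simp only [integral_symm 1]
    exact (continuous_primitive (fun a b ↦ hg.intervalIntegrable a b) 1).neg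
  exact (hprim.tendsto 0).comp hexp

lemma cdfF_eq_zero_of_apply_eq_one {f : ℕ → ℝ} {n : ℕ} (hf_nonneg : ∀ k, 0 ≤ f k)
    (hf_sum : ∑ k ∈ Icc 1 (n + 1), f k = 1) (hfm : f (n + 1) = 1) {k : ℕ} (hk : k ≤ n) :
    cdfF f k = 0 := by
  rw [sum_Icc_succ_top (by omega), hfm, add_eq_right,
    sum_eq_zero_iff_of_nonneg fun j _ ↦ hf_nonneg j] at hf_sum
  exact sum_eq_zero fun j hj ↦ hf_sum j (by simp at hj ⊢; omega)

section PointMass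

variable {f : ℕ → ℝ} {n : ℕ}

lemma phiF_eq_logSeries (hF : ∀ k ≤ n, cdfF f k = 0) : phiF f (n + 1) = logSeries n := by
  ext y
  refine sum_congr rfl fun i hi ↦ ?_
  rw [hF i (by simp at hi; omega)]
  ring

lemma phiDeriv_one_eq (hF : ∀ k ≤ n, cdfF f k = 0) : phiDeriv f (n + 1) 1 = n := by
  rw [phiDeriv, Nat.add_sub_cancel,
    sum_congr rfl fun i hi ↦ by rw [hF i (mem_Icc.1 hi).2]]
  simp

lemma Rfun_eq_self (hF : ∀ k ≤ n, cdfF f k = 0) (γ : ℕ → ℕ → ℝ) (lam s : ℝ)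
    {i : ℕ} (hi : i ≤ n) : Rfun f γ lam s i = i := by
  simp [Rfun, hF i hi]

lemma sum_Icc_rpow_eq_geom_sum (hF : ∀ k ≤ n, cdfF f k = 0) {i : ℕ} (hi : i ≤ n) (v : ℝ) :
    ∑ j ∈ Icc (n + 1 - i) n, (1 - cdfF f j) * v ^ ((i : ℝ) + j - n - 1)
      = ∑ k ∈ range i, v ^ k := by
  rw [← Ico_add_one_right_eq_Icc, sum_Ico_eq_sum_range, show n + 1 - (n + 1 - i) = i by omega]
  refine sum_congr rfl fun k hk ↦ ?_
  have hk : k < i := mem_range.1 hk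
  rw [hF _ (by omega), show (i : ℝ) + ((n + 1 - i + k : ℕ) : ℝ) - n - 1 = k by
    rw [Nat.cast_add, Nat.cast_sub (by omega)]; push_cast; ring]
  simp

lemma qhat_eq (hF : ∀ k ≤ n, cdfF f k = 0) (γ : ℕ → ℕ → ℝ) (lam s v : ℝ) :
    qhat f γ lam (n + 1) s v = 2 * (1 - v) * ∑ i ∈ Icc 1 n, (i : ℝ) * v ^ i := by
  have hexp : ((n + 1 : ℕ) : ℝ) - n - 1 = 0 := by push_cast; ring
  have hinner : ∀ i ∈ Icc 1 n, Rfun f γ lam s i *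
      ∑ j ∈ Icc (n + 1 - i) n, (1 - cdfF f j) * v ^ ((i : ℝ) + j - n - 1)
        = i * ∑ k ∈ range i, v ^ k := fun i hi ↦ by
    have hi : i ≤ n := (mem_Icc.1 hi).2
    rw [Rfun_eq_self hF γ lam s hi, sum_Icc_rpow_eq_geom_sum hF hi]
  have hgeom : (1 - v) * ∑ i ∈ Icc 1 n, (i : ℝ) * ∑ k ∈ range i, v ^ k
      = ∑ i ∈ Icc 1 n, (i : ℝ) - ∑ i ∈ Icc 1 n, (i : ℝ) * v ^ i := by
    rw [mul_sum, ← sum_sub_distrib]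
    exact sum_congr rfl fun i _ ↦ by linear_combination (i : ℝ) * mul_neg_geom_sum v i
  rw [qhat, Nat.add_sub_cancel, phiDeriv_one_eq hF, hexp, rpow_zero, sum_congr rfl hinner,
    sum_congr rfl fun i hi ↦ Rfun_eq_self hF γ lam s (mem_Icc.1 hi).2]
  linear_combination (-2 * (1 - v)) * hgeom

lemma exp_phiF_eq_logSeriesWeight (hF : ∀ k ≤ n, cdfF f k = 0) (u : ℝ) :
    exp (2 * (phiF f (n + 1) u - phiF f (n + 1) 1)) = logSeriesWeight n u := by
  rw [phiF_eq_logSeries hF, logSeriesWeight]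

lemma alphaF_eq (hF : ∀ k ≤ n, cdfF f k = 0) (γ : ℕ → ℕ → ℝ) (lam t : ℝ) :
    alphaF f γ lam (n + 1) t = (n + 1) * ∫ u in exp (-(lam * t))..1, logSeriesWeight n u := by
  have hboundary : exp (2 * (phiF f (n + 1) (exp (-(lam * t))) - phiF f (n + 1) 1)
      - lam * t * ((n + 1 : ℕ) - n))
        = logSeriesWeight n (exp (-(lam * t))) * exp (-(lam * t)) := by
    rw [← exp_phiF_eq_logSeriesWeight hF, ← exp_add]
    push_cast
    ring_nf
  simp only [alphaF, phiDeriv_one_eq hF, hboundary, exp_phiF_eq_logSeriesWeight hF, qhat_eq hF,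
    integral_logSeriesWeight_mul]
  push_cast
  ring

end PointMass

theorem stmt_7_general
    (m : ℕ) (hm : 1 ≤ m) (f : ℕ → ℝ)
    (hf_nonneg : ∀ k, 0 ≤ f k)
    (hf_sum : ∑ k ∈ Finset.Icc 1 m, f k = 1)
    (lam : ℝ) (hlam : 0 < lam)
    (γ : ℕ → ℕ → ℝ)
    (hfm : f m = 1) :
    (∀ y : ℝ, phiF f m y = ∑ j ∈ Finset.Icc 1 (m - 1), y ^ j / (j : ℝ))
    ∧ Filter.Tendsto (fun t : ℝ => alphaF f γ lam m t) Filter.atTop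
        (nhds ((m : ℝ) * ∫ u in (0:ℝ)..1, Real.exp (2 * (phiF f m u - phiF f m 1))))
    ∧ (m : ℝ) * (∫ u in (0:ℝ)..1, Real.exp (2 * (phiF f m u - phiF f m 1)))
        = (m : ℝ) * Real.exp (-2 * ∑ j ∈ Finset.Icc 1 (m - 1), 1 / (j : ℝ)) *
            ∫ u in (0:ℝ)..1, Real.exp (2 * ∑ j ∈ Finset.Icc 1 (m - 1), u ^ j / (j : ℝ)) := by
  obtain ⟨n, rfl⟩ : ∃ n, m = n + 1 := ⟨m - 1, by omega⟩
  have hF : ∀ k ≤ n, cdfF f k = 0 := fun k ↦ cdfF_eq_zero_of_apply_eq_one hf_nonneg hf_sum hfm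
  simp only [exp_phiF_eq_logSeriesWeight hF, alphaF_eq hF, Nat.add_sub_cancel]
  refine ⟨fun y ↦ by rw [phiF_eq_logSeries hF, logSeries], ?_, ?_⟩
  · push_cast
    exact (tendsto_integral_exp_neg_mul_atTop (continuous_logSeriesWeight n) hlam).const_mul _
  · simp only [logSeriesWeight_eq, intervalIntegral.integral_const_mul, logSeries]
    ring

/-- If `f(m) = 1` (so `F(i) = 0` for `i < m`, and `m > 1`), then for the fixed
`λ > 0`, `lim_{t→∞} α(t,λ) = m ∫_0^1 e^{2(φ(u)-φ(1))} du`, where in this case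
`φ(y) = ∑_{j=1}^{m-1} y^j/j`; equivalently the limit equals
`m e^{-2∑_{j=1}^{m-1} 1/j} ∫_0^1 e^{2∑_{j=1}^{m-1} u^j/j} du`. -/
theorem stmt_7
    (m : ℕ) (hm : 1 ≤ m) (f : ℕ → ℝ)
    (hf_nonneg : ∀ k, 0 ≤ f k)
    (hf_sum : ∑ k ∈ Finset.Icc 1 m, f k = 1)
    (hf_supp : ∀ k : ℕ, k = 0 ∨ m < k → f k = 0)
    (lam : ℝ) (hlam : 0 < lam)
    (γ : ℕ → ℕ → ℝ)
    (hγ_zero : ∀ n j : ℕ, cdfF f n = 0 → 1 ≤ j → j ≤ n → γ n j = 1)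
    (hγ_rec : ∀ n i : ℕ, 0 < cdfF f n → 1 ≤ i → i < n →
      γ n i = 2 * (∑ j ∈ Finset.Icc 1 (n - i), cdfF f j * γ (n - j) i) /
        (∑ k ∈ Finset.Icc (i + 1) n, cdfF f k))
    (hγ_diag : ∀ n : ℕ, 0 < cdfF f n →
      γ n n = (n : ℝ) - ∑ i ∈ Finset.Icc 1 (n - 1), γ n i)
    (hm1 : 1 < m) (hfm : f m = 1) :
    (∀ y : ℝ, phiF f m y = ∑ j ∈ Finset.Icc 1 (m - 1), y ^ j / (j : ℝ))
    ∧ Filter.Tendsto (fun t : ℝ => alphaF f γ lam m t) Filter.atTop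
        (nhds ((m : ℝ) * ∫ u in (0:ℝ)..1, Real.exp (2 * (phiF f m u - phiF f m 1))))
    ∧ (m : ℝ) * (∫ u in (0:ℝ)..1, Real.exp (2 * (phiF f m u - phiF f m 1)))
        = (m : ℝ) * Real.exp (-2 * ∑ j ∈ Finset.Icc 1 (m - 1), 1 / (j : ℝ)) *
            ∫ u in (0:ℝ)..1, Real.exp (2 * ∑ j ∈ Finset.Icc 1 (m - 1), u ^ j / (j : ℝ)) :=
  stmt_7_general m hm f hf_nonneg hf_sum lam hlam γ hfm
end
end

section
/- If f(1) > 0, then for every λ > 0: lim_{t→∞} R(t,i) = 0 for every i ≥ 1, hence lim_{t→∞} \hat q(t + (ln u)/λ, u) = 0 for every u ∈ [0,1), and consequently lim_{t→∞} α(t,λ) = 1. -/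
open Finset MeasureTheory intervalIntegral Real Filter

noncomputable section

/-! Since `f 1 > 0`, every `F j` with `j ≥ 1` is positive, so each `R(·, n)` is a finite
combination of exponentials with negative rates and tends to `0`. `q̂(s, v)` is linear in the
values `R(s, i)`, so it tends to `0` as well. In `α` the integrand is evaluated at the times
`s = t + (ln u)/λ ≥ 0`, where `R` is bounded, and its weights in `v` are continuous on `[0, 1]`
because `φ'(1) ≤ m - 1` makes all exponents nonnegative; dominated convergence kills the
integral. The boundary term decays like `exp (-λ t (m - φ'(1)))`. -/

open scoped Topology

theorem tendsto_intervalIntegral_lower_of_dominated {ι : Type*} {l : Filter ι}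
    [l.IsCountablyGenerated] {g : ι → ℝ → ℝ} {a : ι → ℝ} {b c C : ℝ}
    (ha : ∀ᶠ i in l, b ≤ a i ∧ a i ≤ c)
    (hmeas : ∀ᶠ i in l, AEStronglyMeasurable (g i) (volume.restrict (Set.Ioo b c)))
    (hbound : ∀ᶠ i in l, ∀ u ∈ Set.Ioo (a i) c, |g i u| ≤ C)
    (hlim : ∀ u ∈ Set.Ioo b c, Tendsto (fun i => g i u) l (𝓝 0)) :
    Tendsto (fun i => ∫ u in a i..c, g i u) l (𝓝 0) := by
  have hrestrict : ∀ᶠ i in l, ∫ u in Set.Ioo b c, (Set.Ioo (a i) c).indicator (g i) u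
      = ∫ u in a i..c, g i u := by
    filter_upwards [ha] with i ⟨hba, hac⟩
    rw [integral_of_le hac, integral_Ioc_eq_integral_Ioo,
      setIntegral_indicator measurableSet_Ioo,
      Set.inter_eq_self_of_subset_right (Set.Ioo_subset_Ioo_left hba)]
  refine Tendsto.congr' hrestrict ?_
  simpa using tendsto_integral_filter_of_dominated_convergence (fun _ => |C|)
    (hmeas.mono fun i h => h.indicator measurableSet_Ioo)
    (hbound.mono fun i h => Eventually.of_forall fun u => by
      rw [Set.indicator_apply]
      split_ifs with hu
      · exact (h u hu).trans (le_abs_self C)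
      · simp)
    (integrable_const _)
    ((ae_restrict_iff' measurableSet_Ioo).2 (Eventually.of_forall fun u hu =>
      squeeze_zero_norm (fun i => norm_indicator_le_norm_self _ _)
        (by simpa using (hlim u hu).norm)))

section

variable {f : ℕ → ℝ} {γ : ℕ → ℕ → ℝ} {lam : ℝ} {m : ℕ}

lemma cdfF_pos (hf : ∀ k, 0 ≤ f k) (hf1 : 0 < f 1) {k : ℕ} (hk : 1 ≤ k) : 0 < cdfF f k :=
  hf1.trans_le (single_le_sum (fun j _ => hf j) (mem_Icc.2 ⟨le_rfl, hk⟩))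

lemma phiDeriv_one_le (hF : ∀ j, 1 ≤ j → 0 ≤ cdfF f j) (hm : 1 ≤ m) :
    phiDeriv f m 1 ≤ m - 1 :=
  calc phiDeriv f m 1 = ∑ i ∈ Icc 1 (m - 1), (1 - cdfF f i) := by simp [phiDeriv]
    _ ≤ ∑ _i ∈ Icc 1 (m - 1), (1 : ℝ) :=
      sum_le_sum fun i hi => by linarith [hF i (mem_Icc.1 hi).1]
    _ = m - 1 := by simp [Nat.cast_sub hm]

@[fun_prop]
lemma continuous_phiF : Continuous (phiF f m) := by
  unfold phiF
  fun_prop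

@[fun_prop]
lemma continuous_Rfun (n : ℕ) : Continuous fun s => Rfun f γ lam s n := by
  unfold Rfun
  split_ifs <;> fun_prop

lemma tendsto_Rfun_atTop (hF : ∀ j, 1 ≤ j → 0 < cdfF f j) (hlam : 0 < lam) {n : ℕ}
    (hn : 1 ≤ n) : Tendsto (fun t => Rfun f γ lam t n) atTop (𝓝 0) := by
  simp only [Rfun, if_pos (hF n hn)]
  rw [show (0 : ℝ) = ∑ i ∈ Icc 1 n, γ n i * 0 by simp]
  refine tendsto_finsetSum _ fun i hi => Tendsto.const_mul _ ?_
  have hc : 0 < lam * ∑ j ∈ Icc 1 i, cdfF f j :=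
    mul_pos hlam (sum_pos (fun j hj => hF j (mem_Icc.1 hj).1)
      (nonempty_Icc.2 (mem_Icc.1 hi).1))
  exact tendsto_exp_atBot.comp (tendsto_id.const_mul_atTop_of_neg (neg_neg_of_pos hc))

lemma exists_abs_Rfun_le (hF : ∀ j, 1 ≤ j → 0 ≤ cdfF f j) (hlam : 0 ≤ lam) (n : ℕ) :
    ∃ B, ∀ s, 0 ≤ s → |Rfun f γ lam s n| ≤ B := by
  unfold Rfun
  split_ifs
  · refine ⟨∑ i ∈ Icc 1 n, |γ n i|, fun s hs => ?_⟩
    refine (abs_sum_le_sum_abs _ _).trans (sum_le_sum fun i _ => ?_)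
    rw [abs_mul, abs_of_pos (exp_pos _)]
    refine mul_le_of_le_one_right (abs_nonneg _) (exp_le_one_iff.2 ?_)
    exact mul_nonpos_of_nonpos_of_nonneg
      (neg_nonpos.2 (mul_nonneg hlam (sum_nonneg fun j hj => hF j (mem_Icc.1 hj).1))) hs
  · exact ⟨|(n : ℝ)|, fun _ _ => le_rfl⟩

def qhatWeight (f : ℕ → ℝ) (m i : ℕ) (v : ℝ) : ℝ :=
  2 * v ^ ((m : ℝ) - phiDeriv f m 1 - 1) * (1 - v)
    - 2 * (1 - v) ^ 2 * ∑ j ∈ Icc (m - i) (m - 1),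
        (1 - cdfF f j) * v ^ ((i : ℝ) + (j : ℝ) - phiDeriv f m 1 - 1)

lemma qhat_eq_sum_Rfun_mul_qhatWeight (s v : ℝ) :
    qhat f γ lam m s v = ∑ i ∈ Icc 1 (m - 1), Rfun f γ lam s i * qhatWeight f m i v := by
  rw [qhat, mul_sum, mul_sum, ← sum_sub_distrib]
  refine sum_congr rfl fun i _ => ?_
  rw [qhatWeight]
  ring

lemma continuous_qhatWeight (hφ : phiDeriv f m 1 ≤ m - 1) {i : ℕ} (hi : i ≤ m) :
    Continuous (qhatWeight f m i) := by
  have hexp : ∀ j ∈ Icc (m - i) (m - 1), 0 ≤ (i : ℝ) + (j : ℝ) - phiDeriv f m 1 - 1 := by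
    intro j hj
    have : ((m - i : ℕ) : ℝ) ≤ j := Nat.cast_le.2 (mem_Icc.1 hj).1
    rw [Nat.cast_sub hi] at this
    linarith
  have hpow := continuous_rpow_const (q := (m : ℝ) - phiDeriv f m 1 - 1) (by linarith)
  have hpows := fun j hj => continuous_rpow_const (hexp j hj)
  unfold qhatWeight
  fun_prop

lemma exists_abs_qhat_le (hF : ∀ j, 1 ≤ j → 0 ≤ cdfF f j) (hlam : 0 ≤ lam)
    (hφ : phiDeriv f m 1 ≤ m - 1) :
    ∃ C, ∀ s, 0 ≤ s → ∀ v ∈ Set.Icc (0 : ℝ) 1, |qhat f γ lam m s v| ≤ C := by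
  choose B hB using exists_abs_Rfun_le (γ := γ) hF hlam
  have hW : ∀ i ∈ Icc 1 (m - 1),
      ∃ W, ∀ v ∈ Set.Icc (0 : ℝ) 1, ‖qhatWeight f m i v‖ ≤ W :=
    fun i hi => isCompact_Icc.exists_bound_of_continuousOn
      (continuous_qhatWeight hφ ((mem_Icc.1 hi).2.trans (Nat.sub_le m 1))).continuousOn
  choose! W hW using hW
  refine ⟨∑ i ∈ Icc 1 (m - 1), B i * W i, fun s hs v hv => ?_⟩
  rw [qhat_eq_sum_Rfun_mul_qhatWeight]
  refine (abs_sum_le_sum_abs _ _).trans (sum_le_sum fun i hi => ?_)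
  rw [abs_mul]
  exact mul_le_mul (hB i s hs) (hW i hi v hv) (abs_nonneg _) ((abs_nonneg _).trans (hB i s hs))

lemma tendsto_qhat_atTop (hF : ∀ j, 1 ≤ j → 0 < cdfF f j) (hlam : 0 < lam) (c v : ℝ) :
    Tendsto (fun t => qhat f γ lam m (t + c) v) atTop (𝓝 0) := by
  simp only [qhat_eq_sum_Rfun_mul_qhatWeight]
  rw [show (0 : ℝ) = ∑ i ∈ Icc 1 (m - 1), 0 * qhatWeight f m i v by simp]
  exact tendsto_finsetSum _ fun i hi => Tendsto.mul_const _
    ((tendsto_Rfun_atTop hF hlam (mem_Icc.1 hi).1).comp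
      (tendsto_atTop_add_const_right _ c tendsto_id))

lemma tendsto_alphaF_integral (hF : ∀ j, 1 ≤ j → 0 < cdfF f j) (hlam : 0 < lam)
    (hφ : phiDeriv f m 1 ≤ m - 1) :
    Tendsto (fun t => ∫ u in exp (-(lam * t))..1,
      exp (2 * (phiF f m u - phiF f m 1)) * qhat f γ lam m (t + log u / lam) u)
      atTop (𝓝 0) := by
  obtain ⟨C, hC⟩ := exists_abs_qhat_le (γ := γ) (fun j hj => (hF j hj).le) hlam.le hφ
  obtain ⟨E, hE⟩ := (isCompact_Icc (a := (0 : ℝ)) (b := 1)).exists_bound_of_continuousOn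
    (f := fun u => exp (2 * (phiF f m u - phiF f m 1))) (by fun_prop)
  refine tendsto_intervalIntegral_lower_of_dominated (b := 0) (C := E * C) ?_ ?_ ?_
    fun u _ => ?_
  · filter_upwards [eventually_ge_atTop 0] with t ht
    exact ⟨(exp_pos _).le, exp_le_one_iff.2 (by nlinarith)⟩
  · refine Eventually.of_forall fun t => Measurable.aestronglyMeasurable ?_
    simp only [qhat_eq_sum_Rfun_mul_qhatWeight, qhatWeight]
    fun_prop
  · refine Eventually.of_forall fun t u ⟨hlow, hu1⟩ => ?_
    have hu0 : 0 < u := (exp_pos _).trans hlow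
    have hs : 0 ≤ t + log u / lam := by
      have := (lt_log_iff_exp_lt hu0).2 hlow
      have : -t ≤ log u / lam := (le_div_iff₀ hlam).2 (by linarith)
      linarith
    have hE' := hE u ⟨hu0.le, hu1.le⟩
    rw [Real.norm_eq_abs] at hE'
    rw [abs_mul]
    exact mul_le_mul hE' (hC _ hs u ⟨hu0.le, hu1.le⟩) (abs_nonneg _) ((abs_nonneg _).trans hE')
  · simpa using (tendsto_qhat_atTop hF hlam (log u / lam) u).const_mul
      (exp (2 * (phiF f m u - phiF f m 1)))

lemma tendsto_alphaF_boundary (hlam : 0 < lam) (hφ : phiDeriv f m 1 < m) :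
    Tendsto (fun t => ((m : ℝ) - ((m : ℝ) - 1) * exp (-(lam * t))) *
      exp (2 * (phiF f m (exp (-(lam * t))) - phiF f m 1)
        - lam * t * ((m : ℝ) - phiDeriv f m 1))) atTop (𝓝 0) := by
  have hexp : Tendsto (fun t => exp (-(lam * t))) atTop (𝓝 0) :=
    tendsto_exp_neg_atTop_nhds_zero.comp (tendsto_id.const_mul_atTop hlam)
  have hprefactor : Tendsto (fun t => (m : ℝ) - ((m : ℝ) - 1) * exp (-(lam * t))) atTop
      (𝓝 m) := by
    simpa using tendsto_const_nhds.sub (hexp.const_mul ((m : ℝ) - 1))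
  have hphi : Tendsto (fun t => 2 * (phiF f m (exp (-(lam * t))) - phiF f m 1)) atTop
      (𝓝 (2 * (phiF f m 0 - phiF f m 1))) :=
    (((continuous_phiF.tendsto 0).comp hexp).sub_const _).const_mul 2
  have hlin : Tendsto (fun t => lam * t * ((m : ℝ) - phiDeriv f m 1)) atTop atTop :=
    (tendsto_id.const_mul_atTop hlam).atTop_mul_const (sub_pos.2 hφ)
  simpa [← sub_eq_add_neg] using hprefactor.mul
    (tendsto_exp_atBot.comp (hphi.add_atBot (tendsto_neg_atTop_atBot.comp hlin)))

end

theorem stmt_8_general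
    (m : ℕ) (hm : 1 ≤ m) (f : ℕ → ℝ)
    (hf_nonneg : ∀ k, 0 ≤ f k)
    (lam : ℝ) (hlam : 0 < lam)
    (γ : ℕ → ℕ → ℝ)
    (hf1 : 0 < f 1) :
    (∀ i : ℕ, 1 ≤ i →
      Filter.Tendsto (fun t : ℝ => Rfun f γ lam t i) Filter.atTop (nhds 0))
    ∧ (∀ u : ℝ, 0 ≤ u → u < 1 →
      Filter.Tendsto (fun t : ℝ => qhat f γ lam m (t + Real.log u / lam) u)
        Filter.atTop (nhds 0))
    ∧ Filter.Tendsto (fun t : ℝ => alphaF f γ lam m t) Filter.atTop (nhds 1) := by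
  have hF : ∀ j, 1 ≤ j → 0 < cdfF f j := fun j => cdfF_pos hf_nonneg hf1
  have hφ : phiDeriv f m 1 ≤ m - 1 := phiDeriv_one_le (fun j hj => (hF j hj).le) hm
  refine ⟨fun i => tendsto_Rfun_atTop hF hlam, fun u _ _ => tendsto_qhat_atTop hF hlam _ u, ?_⟩
  simpa [alphaF] using (tendsto_const_nhds.sub (tendsto_alphaF_integral hF hlam hφ)).sub
    (tendsto_alphaF_boundary hlam (by linarith))

/-- If `f(1) > 0`, then `lim_{t→∞} R(t,i) = 0` for every `i ≥ 1`, hence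
`lim_{t→∞} q̂(t + (ln u)/λ, u) = 0` for every `u ∈ [0,1)`, and `lim_{t→∞} α(t,λ) = 1`. -/
theorem stmt_8
    (m : ℕ) (hm : 1 ≤ m) (f : ℕ → ℝ)
    (hf_nonneg : ∀ k, 0 ≤ f k)
    (hf_sum : ∑ k ∈ Finset.Icc 1 m, f k = 1)
    (hf_supp : ∀ k : ℕ, k = 0 ∨ m < k → f k = 0)
    (lam : ℝ) (hlam : 0 < lam)
    (γ : ℕ → ℕ → ℝ)
    (hγ_zero : ∀ n j : ℕ, cdfF f n = 0 → 1 ≤ j → j ≤ n → γ n j = 1)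
    (hγ_rec : ∀ n i : ℕ, 0 < cdfF f n → 1 ≤ i → i < n →
      γ n i = 2 * (∑ j ∈ Finset.Icc 1 (n - i), cdfF f j * γ (n - j) i) /
        (∑ k ∈ Finset.Icc (i + 1) n, cdfF f k))
    (hγ_diag : ∀ n : ℕ, 0 < cdfF f n →
      γ n n = (n : ℝ) - ∑ i ∈ Finset.Icc 1 (n - 1), γ n i)
    (hf1 : 0 < f 1) :
    (∀ i : ℕ, 1 ≤ i →
      Filter.Tendsto (fun t : ℝ => Rfun f γ lam t i) Filter.atTop (nhds 0))
    ∧ (∀ u : ℝ, 0 ≤ u → u < 1 →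
      Filter.Tendsto (fun t : ℝ => qhat f γ lam m (t + Real.log u / lam) u)
        Filter.atTop (nhds 0))
    ∧ Filter.Tendsto (fun t : ℝ => alphaF f γ lam m t) Filter.atTop (nhds 1) :=
  stmt_8_general m hm f hf_nonneg lam hlam γ hf1
end
end

section
/- Let κ = (m+1)/(m−μ+1). For every t ≥ 0 and every integer n ≥ m, K(t, n−m) − m − mκ ≤ C(t,n) ≤ μ + K(t,n) + mκ. -/
/-!
Write `G_i = F(1) + ⋯ + F(i)`. The recursion for `γ` says exactly that the line quantities
`R_j(t) = ∑_i γ_{j,i} e^{-λ G_i t}` solve the lower-triangular linear system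
`R_j' = -λ (G_j R_j - 2 ∑_{l ≤ j} F(l) R_{j-l})`, and then so does `S_j = -R_j' / λ`.
The coupling coefficients are nonnegative, so the system preserves order: multiplying by
`e^{λ G_j t}` and inducting on `j` gives `0 ≤ R_j ≤ j`, `0 ≤ S_j ≤ D_j := S_j(0)` and
`R_{j+1} - R_j ≤ 2`. Here `D_j` is the sum of the truncated means `∑_{k ≤ s} k f(k)` over
`s ≤ j`; it is superadditive, and together with the monotonicity of `F` this is what makes
`D` a supersolution.

The recursion for `γ̃` says that `Q = n - C(·, n)` solves `Q' = -λ n (Q - W)` with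
`W = ∑_k f(k) R_{n-k}`. Comparing `Q` with `W` (using `S ≥ 0`) and with `W + μ` (using
`S_j ≤ D_j ≤ μ j`) gives `W ≤ Q ≤ W + μ`, and the increment bound places `W` between
`R_n - 2μ` and `R_{n-m} + 2(m - μ)`. The term `mκ` only has to dominate `μ`.
-/

open Finset MeasureTheory intervalIntegral Real Filter

noncomputable section

/-- The mean `μ = ∑_{k=1}^m k f(k)` of the bundle-size distribution. -/
def muF (f : ℕ → ℝ) (m : ℕ) : ℝ := ∑ k ∈ Finset.Icc 1 m, (k : ℝ) * f k

/-- `C(t,n)`: the expected number of packages picked up by time `t` starting from `n`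
packages on a circle, in closed form via the constants `γ̃`. -/
def Cfun (f : ℕ → ℝ) (tγ : ℕ → ℕ → ℝ) (lam t : ℝ) (n : ℕ) : ℝ :=
  (n : ℝ)
    - (∑ i ∈ Finset.Icc 1 (n - 1),
        tγ n i * Real.exp (-(lam * ∑ j ∈ Finset.Icc 1 i, cdfF f j) * t))
    - tγ n n * Real.exp (-(lam * (n : ℝ)) * t)

namespace PackagePickup

structure IsPMF (f : ℕ → ℝ) (m : ℕ) : Prop where
  nonneg : ∀ k, 0 ≤ f k
  sum_eq_one : ∑ k ∈ Icc 1 m, f k = 1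
  eq_zero : ∀ k : ℕ, k = 0 ∨ m < k → f k = 0

lemma sum_Icc_one_eq_sum_range (h : ℕ → ℝ) (n : ℕ) :
    ∑ l ∈ Icc 1 n, h l = ∑ k ∈ range n, h (k + 1) := by
  rw [← Ico_add_one_right_eq_Icc, sum_Ico_eq_sum_range]
  simp [add_comm]

lemma sum_Icc_sum_Icc_sub_comm (j : ℕ) (h : ℕ → ℕ → ℝ) :
    ∑ i ∈ Icc 1 j, ∑ l ∈ Icc 1 (j - i), h i l = ∑ l ∈ Icc 1 j, ∑ i ∈ Icc 1 (j - l), h i l :=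
  sum_comm' fun i l => by simp only [mem_Icc]; omega

section Cdf

variable {f : ℕ → ℝ}

lemma cdfF_zero : cdfF f 0 = 0 := by simp [cdfF]

lemma cdfF_succ (k : ℕ) : cdfF f (k + 1) = cdfF f k + f (k + 1) :=
  sum_Icc_succ_top (by omega) f

lemma cdfF_nonneg (hf : ∀ k, 0 ≤ f k) (k : ℕ) : 0 ≤ cdfF f k :=
  sum_nonneg fun j _ => hf j

lemma monotone_cdfF (hf : ∀ k, 0 ≤ f k) : Monotone (cdfF f) :=
  monotone_nat_of_le_succ fun k => by rw [cdfF_succ]; linarith [hf (k + 1)]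

lemma cdfF_eq_zero_of_le (hf : ∀ k, 0 ≤ f k) {j l : ℕ} (hl : l ≤ j) (h : cdfF f j = 0) :
    cdfF f l = 0 :=
  le_antisymm (h ▸ monotone_cdfF hf hl) (cdfF_nonneg hf l)

lemma IsPMF.sum_Icc_mul_eq {m n : ℕ} (hf : IsPMF f m) (hn : m ≤ n) (g : ℕ → ℝ) :
    ∑ k ∈ Icc 1 n, f k * g k = ∑ k ∈ Icc 1 m, f k * g k := by
  refine (sum_subset (Icc_subset_Icc le_rfl hn) fun k hk hkm => ?_).symm
  simp only [mem_Icc] at hk hkm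
  rw [hf.eq_zero k (Or.inr (by omega)), zero_mul]

lemma IsPMF.cdfF_eq_one {m n : ℕ} (hf : IsPMF f m) (hn : m ≤ n) : cdfF f n = 1 := by
  simpa [cdfF, hf.sum_eq_one] using hf.sum_Icc_mul_eq hn fun _ => 1

lemma IsPMF.cdfF_le_one {m : ℕ} (hf : IsPMF f m) (k : ℕ) : cdfF f k ≤ 1 :=
  (monotone_cdfF hf.nonneg (le_max_left k m)).trans (hf.cdfF_eq_one (le_max_right k m)).le

lemma muF_succ (s : ℕ) : muF f (s + 1) = muF f s + (s + 1) * f (s + 1) := by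
  rw [muF, sum_Icc_succ_top (by omega), muF]
  push_cast
  ring

lemma muF_nonneg (hf : ∀ k, 0 ≤ f k) (s : ℕ) : 0 ≤ muF f s :=
  sum_nonneg fun k _ => mul_nonneg k.cast_nonneg (hf k)

lemma monotone_muF (hf : ∀ k, 0 ≤ f k) : Monotone (muF f) :=
  monotone_nat_of_le_succ fun s => by
    rw [muF_succ]; nlinarith [hf (s + 1), (s.cast_nonneg : (0 : ℝ) ≤ s)]

lemma IsPMF.muF_eq {m n : ℕ} (hf : IsPMF f m) (hn : m ≤ n) : muF f n = muF f m := by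
  simpa [muF, mul_comm] using hf.sum_Icc_mul_eq hn fun k => (k : ℝ)

lemma IsPMF.muF_le {m : ℕ} (hf : IsPMF f m) (s : ℕ) : muF f s ≤ muF f m :=
  (monotone_muF hf.nonneg (le_max_left s m)).trans (hf.muF_eq (le_max_right s m)).le

lemma IsPMF.muF_le_self {m : ℕ} (hf : IsPMF f m) : muF f m ≤ m := by
  calc muF f m ≤ ∑ k ∈ Icc 1 m, (m : ℝ) * f k :=
        sum_le_sum fun k hk => mul_le_mul_of_nonneg_right
          (by exact_mod_cast (mem_Icc.mp hk).2) (hf.nonneg k)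
    _ = m := by rw [← mul_sum, hf.sum_eq_one, mul_one]

def cdfSum (f : ℕ → ℝ) (i : ℕ) : ℝ := ∑ j ∈ Icc 1 i, cdfF f j

lemma cdfSum_succ (i : ℕ) : cdfSum f (i + 1) = cdfSum f i + cdfF f (i + 1) :=
  sum_Icc_succ_top (by omega) _

lemma cdfSum_nonneg (hf : ∀ k, 0 ≤ f k) (i : ℕ) : 0 ≤ cdfSum f i :=
  sum_nonneg fun j _ => cdfF_nonneg hf j

lemma cdfSum_eq (i : ℕ) : cdfSum f i = (i + 1) * cdfF f i - muF f i := by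
  induction i with
  | zero => simp [cdfSum, cdfF_zero, muF]
  | succ i ih => rw [cdfSum_succ, ih, cdfF_succ, muF_succ]; push_cast; ring

lemma cdfSum_sub_cdfSum {i j : ℕ} (hij : i ≤ j) :
    cdfSum f j - cdfSum f i = ∑ k ∈ Icc (i + 1) j, cdfF f k := by
  rw [cdfSum, cdfSum, Icc_add_one_left_eq_Ioc, ← Nat.zero_add 1,
    Icc_add_one_left_eq_Ioc, Icc_add_one_left_eq_Ioc,
    ← sum_Ioc_consecutive _ i.zero_le hij, add_sub_cancel_left]

lemma IsPMF.cdfSum_le {m : ℕ} (hf : IsPMF f m) (i : ℕ) : cdfSum f i ≤ i := by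
  simpa [cdfSum] using sum_le_card_nsmul (Icc 1 i) (cdfF f) 1 fun k _ => hf.cdfF_le_one k

lemma cdfSum_eq_zero_of_le (hf : ∀ k, 0 ≤ f k) {i j : ℕ} (hij : i ≤ j) (h : cdfF f j = 0) :
    cdfSum f i = 0 :=
  sum_eq_zero fun l hl => cdfF_eq_zero_of_le hf (by simp only [mem_Icc] at hl; omega) h

end Cdf

section Convolution

variable {f : ℕ → ℝ}

def dconv (a g : ℕ → ℝ) (j : ℕ) : ℝ := ∑ l ∈ Icc 1 j, a l * g (j - l)

lemma dconv_nonneg {a g : ℕ → ℝ} {j : ℕ} (ha : ∀ l, 0 ≤ a l) (hg : ∀ l < j, 0 ≤ g l) :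
    0 ≤ dconv a g j :=
  sum_nonneg fun l hl => mul_nonneg (ha l) (hg _ (by simp only [mem_Icc] at hl; omega))

lemma dconv_mono {a g g' : ℕ → ℝ} {j : ℕ} (ha : ∀ l, 0 ≤ a l) (hg : ∀ l < j, g l ≤ g' l) :
    dconv a g j ≤ dconv a g' j :=
  sum_le_sum fun l hl =>
    mul_le_mul_of_nonneg_left (hg _ (by simp only [mem_Icc] at hl; omega)) (ha l)

lemma dconv_eq_sum_antidiagonal {a : ℕ → ℝ} (ha : a 0 = 0) (g : ℕ → ℝ) (j : ℕ) :
    dconv a g j = ∑ p ∈ antidiagonal j, a p.1 * g p.2 := by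
  rw [Nat.sum_antidiagonal_eq_sum_range_succ (fun x y => a x * g y), sum_range_succ', ha,
    zero_mul, add_zero, dconv, sum_Icc_one_eq_sum_range]

lemma dconv_cdfF_succ (g : ℕ → ℝ) (j : ℕ) :
    dconv (cdfF f) g (j + 1) = dconv (cdfF f) g j + dconv f g (j + 1) := by
  simp only [dconv, sum_Icc_one_eq_sum_range, cdfF_succ, add_mul, sum_add_distrib]
  rw [sum_range_succ', cdfF_zero, zero_mul, add_zero]
  simp [cdfF_succ, add_mul, sum_add_distrib]

lemma dconv_natCast (j : ℕ) : dconv f (↑) j = j * cdfF f j - muF f j := by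
  simp only [dconv, cdfF, muF, mul_sum, ← sum_sub_distrib]
  refine sum_congr rfl fun l hl => ?_
  rw [Nat.cast_sub (mem_Icc.mp hl).2]
  ring

lemma dconv_natCast_succ (j : ℕ) : dconv f (↑) (j + 1) = cdfSum f j := by
  have := cdfSum_eq (f := f) (j + 1)
  rw [dconv_natCast, ← sub_eq_of_eq_add (cdfSum_succ j)] at *
  push_cast at *
  linarith

end Convolution

section TruncatedMeans

variable {f : ℕ → ℝ}

def muFSum (f : ℕ → ℝ) (j : ℕ) : ℝ := ∑ s ∈ Icc 1 j, muF f s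

lemma muFSum_succ (j : ℕ) : muFSum f (j + 1) = muFSum f j + muF f (j + 1) :=
  sum_Icc_succ_top (by omega) _

lemma muFSum_eq (j : ℕ) : muFSum f j = j * cdfSum f j - 2 * dconv (cdfF f) (↑) j := by
  induction j with
  | zero => simp [muFSum, cdfSum, dconv]
  | succ j ih =>
    have := cdfSum_eq (f := f) (j + 1)
    rw [muFSum_succ, ih, dconv_cdfF_succ, dconv_natCast_succ, cdfSum_succ] at *
    push_cast at *
    linarith

lemma muFSum_nonneg (hf : ∀ k, 0 ≤ f k) (j : ℕ) : 0 ≤ muFSum f j :=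
  sum_nonneg fun s _ => muF_nonneg hf s

lemma monotone_muFSum (hf : ∀ k, 0 ≤ f k) : Monotone (muFSum f) :=
  monotone_nat_of_le_succ fun j => by rw [muFSum_succ]; linarith [muF_nonneg hf (j + 1)]

lemma muFSum_add_le (hf : ∀ k, 0 ≤ f k) (a b : ℕ) :
    muFSum f a + muFSum f b ≤ muFSum f (a + b) := by
  simp only [muFSum, sum_Icc_one_eq_sum_range, sum_range_add]
  gcongr with k
  exact monotone_muF hf (by omega)

lemma IsPMF.muFSum_le {m : ℕ} (hf : IsPMF f m) (j : ℕ) : muFSum f j ≤ muF f m * j := by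
  simpa [muFSum, mul_comm] using sum_le_card_nsmul (Icc 1 j) (muF f) _ fun s _ => hf.muF_le s

-- Pair `l` with `j - l`: `F` and `D` are both monotone, and `D l + D (j - l) ≤ D j`.
lemma two_mul_dconv_muFSum_le (hf : ∀ k, 0 ≤ f k) (j : ℕ) :
    2 * dconv (cdfF f) (muFSum f) j ≤ cdfSum f j * muFSum f j := by
  set D := muFSum f
  have key : ∀ p ∈ antidiagonal j, 2 * (cdfF f p.1 * D p.2 + cdfF f p.2 * D p.1)
      ≤ (cdfF f p.1 + cdfF f p.2) * D j := by
    rintro ⟨a, b⟩ hab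
    rw [HasAntidiagonal.mem_antidiagonal] at hab
    have hsup : D a + D b ≤ D j := hab ▸ muFSum_add_le hf a b
    have := cdfF_nonneg hf a
    have := cdfF_nonneg hf b
    rcases le_total a b with h | h
    · nlinarith [monotone_cdfF hf h, monotone_muFSum hf h]
    · nlinarith [monotone_cdfF hf h, monotone_muFSum hf h]
  have hG : cdfSum f j = dconv (cdfF f) (fun _ => 1) j := by simp [dconv, cdfSum]
  have hsum := sum_le_sum key
  rw [hG, dconv_eq_sum_antidiagonal cdfF_zero, dconv_eq_sum_antidiagonal cdfF_zero]
  simp only [mul_add, add_mul, sum_add_distrib, ← sum_mul, ← mul_sum, mul_one] at hsum ⊢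
  have h1 := Nat.sum_antidiagonal_swap (n := j) (f := fun p => cdfF f p.1 * D p.2)
  have h2 := Nat.sum_antidiagonal_swap (n := j) (f := fun p => cdfF f p.1)
  simp only [Prod.fst_swap, Prod.snd_swap] at h1 h2
  rw [h1, h2] at hsum
  linarith

end TruncatedMeans

section Comparison

theorem nonneg_of_hasDerivAt_add_mul_nonneg {g g' : ℝ → ℝ} (b : ℝ)
    (hg : ∀ u, HasDerivAt g (g' u) u) (h0 : 0 ≤ g 0)
    (hg' : ∀ u, 0 ≤ u → 0 ≤ g' u + b * g u) {t : ℝ} (ht : 0 ≤ t) : 0 ≤ g t := by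
  have hderiv : ∀ u, HasDerivAt (fun v => exp (b * v) * g v)
      (exp (b * u) * (g' u + b * g u)) u := fun u =>
    (((hasDerivAt_id' u).const_mul b).exp.fun_mul (hg u)).congr_deriv (by ring)
  have hmono : MonotoneOn (fun v => exp (b * v) * g v) (Set.Ici 0) :=
    monotoneOn_of_hasDerivWithinAt_nonneg (convex_Ici 0)
      (fun v _ => (hderiv v).continuousAt.continuousWithinAt)
      (fun v _ => (hderiv v).hasDerivWithinAt)
      (fun v hv => mul_nonneg (exp_pos _).le (hg' v (interior_subset hv)))
  have := hmono Set.self_mem_Ici ht ht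
  simp only [mul_zero, exp_zero, one_mul] at this
  exact nonneg_of_mul_nonneg_right (h0.trans this) (exp_pos _)

theorem nonneg_of_hasDerivAt_triangular {X X' : ℕ → ℝ → ℝ} (b : ℕ → ℝ)
    (hX : ∀ j u, HasDerivAt (X j) (X' j u) u) (h0 : ∀ j, 0 ≤ X j 0)
    (hstep : ∀ j u, 0 ≤ u → (∀ l < j, 0 ≤ X l u) → 0 ≤ X' j u + b j * X j u)
    (j : ℕ) {t : ℝ} (ht : 0 ≤ t) : 0 ≤ X j t := by
  induction j using Nat.strong_induction_on generalizing t with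
  | _ j ih =>
    exact nonneg_of_hasDerivAt_add_mul_nonneg (b j) (hX j) (h0 j)
      (fun u hu => hstep j u hu fun l hl => ih l hl hu) ht

end Comparison

section Line

variable {f : ℕ → ℝ} {lam : ℝ} {c : ℕ → ℕ → ℝ}

def lineSum (f : ℕ → ℝ) (lam : ℝ) (c : ℕ → ℕ → ℝ) (j : ℕ) (t : ℝ) : ℝ :=
  ∑ i ∈ Icc 1 j, c j i * exp (-(lam * cdfSum f i) * t)

def weight (f : ℕ → ℝ) (c : ℕ → ℕ → ℝ) (j i : ℕ) : ℝ := cdfSum f i * c j i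

def IsLineCoeff (f : ℕ → ℝ) (c : ℕ → ℕ → ℝ) : Prop :=
  ∀ j i, 1 ≤ i → i ≤ j →
    (cdfSum f j - cdfSum f i) * c j i = 2 * ∑ l ∈ Icc 1 (j - i), cdfF f l * c (j - l) i

lemma IsLineCoeff.weight (hc : IsLineCoeff f c) : IsLineCoeff f (weight f c) := by
  intro j i h1 hij
  simp only [PackagePickup.weight]
  rw [mul_left_comm, hc j i h1 hij, mul_sum, mul_sum, mul_sum]
  exact sum_congr rfl fun l _ => by ring

lemma lineSum_zero (j : ℕ) : lineSum f lam c j 0 = ∑ i ∈ Icc 1 j, c j i := by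
  simp [lineSum]

lemma hasDerivAt_lineSum (c : ℕ → ℕ → ℝ) (j : ℕ) (t : ℝ) :
    HasDerivAt (lineSum f lam c j) (-lam * lineSum f lam (weight f c) j t) t := by
  have := HasDerivAt.fun_sum (u := Icc 1 j) fun i _ =>
    ((hasDerivAt_id' t).const_mul (-(lam * cdfSum f i))).exp.const_mul (c j i)
  refine this.congr_deriv ?_
  simp only [lineSum, weight, mul_sum]
  exact sum_congr rfl fun i _ => by ring

lemma lineSum_weight (hc : IsLineCoeff f c) (j : ℕ) (t : ℝ) :
    lineSum f lam (weight f c) j t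
      = cdfSum f j * lineSum f lam c j t
        - 2 * dconv (cdfF f) (fun k => lineSum f lam c k t) j := by
  have hdiff : cdfSum f j * lineSum f lam c j t - lineSum f lam (weight f c) j t
      = ∑ i ∈ Icc 1 j, ∑ l ∈ Icc 1 (j - i),
          2 * (cdfF f l * (c (j - l) i * exp (-(lam * cdfSum f i) * t))) := by
    simp only [lineSum, weight, mul_sum, ← sum_sub_distrib]
    refine sum_congr rfl fun i hi => ?_
    obtain ⟨h1, hij⟩ := mem_Icc.mp hi
    calc _ = (cdfSum f j - cdfSum f i) * c j i * exp (-(lam * cdfSum f i) * t) := by ring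
      _ = _ := by
        rw [hc j i h1 hij, mul_sum, sum_mul]
        exact sum_congr rfl fun l _ => by ring
  rw [sum_Icc_sum_Icc_sub_comm] at hdiff
  simp only [dconv, lineSum, mul_sum] at hdiff ⊢
  linarith

lemma lineSum_nonneg (hf : ∀ k, 0 ≤ f k) (hlam : 0 ≤ lam) (hc : IsLineCoeff f c)
    (h0 : ∀ j, 0 ≤ lineSum f lam c j 0) (j : ℕ) {t : ℝ} (ht : 0 ≤ t) :
    0 ≤ lineSum f lam c j t :=
  nonneg_of_hasDerivAt_triangular (fun j => lam * cdfSum f j) (hasDerivAt_lineSum c) h0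
    (fun j u _ hX => by
      rw [lineSum_weight hc]
      linarith [mul_nonneg hlam (dconv_nonneg (cdfF_nonneg hf) hX)]) j ht

lemma lineSum_le (hf : ∀ k, 0 ≤ f k) (hlam : 0 ≤ lam) (hc : IsLineCoeff f c) {B : ℕ → ℝ}
    (hB : ∀ j, 2 * dconv (cdfF f) B j ≤ cdfSum f j * B j)
    (h0 : ∀ j, lineSum f lam c j 0 ≤ B j) (j : ℕ) {t : ℝ} (ht : 0 ≤ t) :
    lineSum f lam c j t ≤ B j :=
  sub_nonneg.mp <| nonneg_of_hasDerivAt_triangular (X := fun j u => B j - lineSum f lam c j u)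
    (fun j => lam * cdfSum f j) (fun j u => (hasDerivAt_lineSum c j u).const_sub (B j))
    (fun j => sub_nonneg.mpr (h0 j))
    (fun j u _ hX => by
      have hle := dconv_mono (j := j) (cdfF_nonneg hf) fun l hl => sub_nonneg.mp (hX l hl)
      rw [lineSum_weight hc]
      linarith [mul_nonneg hlam (sub_nonneg.mpr (hB j)), mul_nonneg hlam (sub_nonneg.mpr hle)])
    j ht

end Line

section LineBounds

variable {f : ℕ → ℝ} {lam : ℝ} {c : ℕ → ℕ → ℝ}

lemma lineSum_weight_zero (hc : IsLineCoeff f c) (hrow : ∀ j, ∑ i ∈ Icc 1 j, c j i = j)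
    (j : ℕ) : lineSum f lam (weight f c) j 0 = muFSum f j := by
  simp only [lineSum_weight hc, lineSum_zero, hrow, muFSum_eq, mul_comm]

lemma lineSum_mem_Icc (hf : ∀ k, 0 ≤ f k) (hlam : 0 ≤ lam) (hc : IsLineCoeff f c)
    (hrow : ∀ j, ∑ i ∈ Icc 1 j, c j i = j) (j : ℕ) {t : ℝ} (ht : 0 ≤ t) :
    lineSum f lam c j t ∈ Set.Icc 0 (j : ℝ) :=
  ⟨lineSum_nonneg hf hlam hc (fun j => by simp [lineSum_zero, hrow]) j ht,
    lineSum_le hf hlam hc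
      (fun j => by linarith [muFSum_eq (f := f) j, muFSum_nonneg hf j])
      (fun j => (lineSum_zero j).trans_le (hrow j).le) j ht⟩

lemma lineSum_weight_mem_Icc (hf : ∀ k, 0 ≤ f k) (hlam : 0 ≤ lam) (hc : IsLineCoeff f c)
    (hrow : ∀ j, ∑ i ∈ Icc 1 j, c j i = j) (j : ℕ) {t : ℝ} (ht : 0 ≤ t) :
    lineSum f lam (weight f c) j t ∈ Set.Icc 0 (muFSum f j) :=
  ⟨lineSum_nonneg hf hlam hc.weight
      (fun j => (lineSum_weight_zero hc hrow j).symm ▸ muFSum_nonneg hf j) j ht,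
    lineSum_le hf hlam hc.weight (two_mul_dconv_muFSum_le hf)
      (fun j => (lineSum_weight_zero hc hrow j).le) j ht⟩

lemma lineSum_succ_sub_le (hf : ∀ k, 0 ≤ f k) (hlam : 0 ≤ lam) (hc : IsLineCoeff f c)
    (hrow : ∀ j, ∑ i ∈ Icc 1 j, c j i = j) (j : ℕ) {t : ℝ} (ht : 0 ≤ t) :
    lineSum f lam c (j + 1) t - lineSum f lam c j t ≤ 2 := by
  suffices 0 ≤ 2 - lineSum f lam c (j + 1) t + lineSum f lam c j t by linarith
  refine nonneg_of_hasDerivAt_add_mul_nonneg (lam * cdfSum f j)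
    (fun u => ((hasDerivAt_lineSum c (j + 1) u).const_sub 2).fun_add (hasDerivAt_lineSum c j u))
    (by simp only [lineSum_zero, hrow]; push_cast; linarith) (fun u hu => ?_) ht
  have hconv : dconv f (fun k => lineSum f lam c k u) (j + 1) ≤ cdfSum f j :=
    (dconv_mono hf fun k _ => (lineSum_mem_Icc hf hlam hc hrow k hu).2).trans_eq
      (dconv_natCast_succ j)
  have hlast : 0 ≤ cdfF f (j + 1) * lineSum f lam c (j + 1) u :=
    mul_nonneg (cdfF_nonneg hf _) (lineSum_mem_Icc hf hlam hc hrow _ hu).1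
  rw [lineSum_weight hc, lineSum_weight hc, dconv_cdfF_succ, cdfSum_succ]
  linarith [mul_nonneg hlam hlast, mul_nonneg hlam (sub_nonneg.mpr hconv)]

lemma lineSum_sub_le (hf : ∀ k, 0 ≤ f k) (hlam : 0 ≤ lam) (hc : IsLineCoeff f c)
    (hrow : ∀ j, ∑ i ∈ Icc 1 j, c j i = j) {a b : ℕ} (hab : a ≤ b) {t : ℝ} (ht : 0 ≤ t) :
    lineSum f lam c b t - lineSum f lam c a t ≤ 2 * ((b : ℝ) - a) := by
  induction b, hab using Nat.le_induction with
  | base => simp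
  | succ b _ ih =>
    push_cast
    linarith [lineSum_succ_sub_le hf hlam hc hrow b ht]

end LineBounds

section Circle

variable {f : ℕ → ℝ} {lam : ℝ} {γ tγ : ℕ → ℕ → ℝ} {m n : ℕ}

def IsCircleCoeff (f : ℕ → ℝ) (γ tγ : ℕ → ℕ → ℝ) (n : ℕ) : Prop :=
  ∀ i, 1 ≤ i → i ≤ n - 1 → (n - cdfSum f i) * tγ n i = n * ∑ k ∈ Icc 1 (n - i), f k * γ (n - k) i

def circleSum (f : ℕ → ℝ) (lam : ℝ) (tγ : ℕ → ℕ → ℝ) (n : ℕ) (t : ℝ) : ℝ :=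
  ∑ i ∈ Icc 1 (n - 1), tγ n i * exp (-(lam * cdfSum f i) * t) + tγ n n * exp (-(lam * n) * t)

lemma Cfun_eq (t : ℝ) (n : ℕ) : Cfun f tγ lam t n = n - circleSum f lam tγ n t := by
  simp only [Cfun, circleSum, cdfSum]
  ring

lemma dconv_const_mul (a g : ℕ → ℝ) (r : ℝ) (j : ℕ) :
    dconv a (fun k => r * g k) j = r * dconv a g j := by
  simp only [dconv, mul_sum]
  exact sum_congr rfl fun l _ => by ring

lemma hasDerivAt_dconv (a : ℕ → ℝ) {X : ℕ → ℝ → ℝ} {X' : ℕ → ℝ} {t : ℝ}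
    (hX : ∀ k, HasDerivAt (X k) (X' k) t) (j : ℕ) :
    HasDerivAt (fun u => dconv a (fun k => X k u) j) (dconv a X' j) t :=
  HasDerivAt.fun_sum fun l _ => (hX _).const_mul (a l)

lemma sum_Icc_pred_eq {g : ℕ → ℝ} (hg : g n = 0) :
    ∑ i ∈ Icc 1 (n - 1), g i = ∑ i ∈ Icc 1 n, g i := by
  rcases n with _ | n
  · rfl
  · rw [sum_Icc_succ_top (by omega), hg, add_zero, Nat.add_sub_cancel]

lemma sum_sub_cdfSum_mul_eq_dconv (htγ : IsCircleCoeff f γ tγ n) (t : ℝ) :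
    ∑ i ∈ Icc 1 (n - 1), (n - cdfSum f i) * tγ n i * exp (-(lam * cdfSum f i) * t)
      = n * dconv f (fun k => lineSum f lam γ k t) n := by
  calc _ = ∑ i ∈ Icc 1 (n - 1), ∑ k ∈ Icc 1 (n - i),
        n * (f k * (γ (n - k) i * exp (-(lam * cdfSum f i) * t))) := by
        refine sum_congr rfl fun i hi => ?_
        rw [htγ i (mem_Icc.mp hi).1 (mem_Icc.mp hi).2, mul_sum, sum_mul]
        exact sum_congr rfl fun k _ => by ring
    _ = ∑ i ∈ Icc 1 n, ∑ k ∈ Icc 1 (n - i),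
        n * (f k * (γ (n - k) i * exp (-(lam * cdfSum f i) * t))) :=
        sum_Icc_pred_eq (by simp)
    _ = _ := by
        rw [sum_Icc_sum_Icc_sub_comm]
        simp only [dconv, lineSum, mul_sum]

lemma hasDerivAt_circleSum (htγ : IsCircleCoeff f γ tγ n) (t : ℝ) :
    HasDerivAt (circleSum f lam tγ n) (-(lam * n) *
      (circleSum f lam tγ n t - dconv f (fun k => lineSum f lam γ k t) n)) t := by
  have hsum := HasDerivAt.fun_sum (u := Icc 1 (n - 1)) fun i _ =>
    ((hasDerivAt_id' t).const_mul (-(lam * cdfSum f i))).exp.const_mul (tγ n i)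
  have hlast := ((hasDerivAt_id' t).const_mul (-(lam * n))).exp.const_mul (tγ n n)
  refine (hsum.fun_add hlast).congr_deriv ?_
  have hid := sum_sub_cdfSum_mul_eq_dconv (lam := lam) htγ t
  simp only [sub_mul, sum_sub_distrib] at hid
  have hpull : ∑ i ∈ Icc 1 (n - 1), (n : ℝ) * tγ n i * exp (-(lam * cdfSum f i) * t)
      = n * ∑ i ∈ Icc 1 (n - 1), tγ n i * exp (-(lam * cdfSum f i) * t) := by
    simp only [mul_sum, mul_assoc]
  have hder : ∑ i ∈ Icc 1 (n - 1),
        tγ n i * (exp (-(lam * cdfSum f i) * t) * (-(lam * cdfSum f i) * 1))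
      = -lam * ∑ i ∈ Icc 1 (n - 1), cdfSum f i * tγ n i * exp (-(lam * cdfSum f i) * t) := by
    rw [mul_sum]
    exact sum_congr rfl fun i _ => by ring
  rw [hder, circleSum]
  linear_combination lam * hid - lam * hpull

lemma IsPMF.dconv_natCast {m n : ℕ} (hf : IsPMF f m) (hn : m ≤ n) :
    dconv f (↑) n = n - muF f m := by
  rw [PackagePickup.dconv_natCast, hf.cdfF_eq_one hn, hf.muF_eq hn, mul_one]

lemma circleSum_zero (hdiag : tγ n n = n - ∑ i ∈ Icc 1 (n - 1), tγ n i) :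
    circleSum f lam tγ n 0 = n := by
  simp [circleSum, hdiag]

lemma dconv_lineSum_le_circleSum (hf : IsPMF f m) (hlam : 0 ≤ lam) (hc : IsLineCoeff f γ)
    (hrow : ∀ j, ∑ i ∈ Icc 1 j, γ j i = j)
    (htγ : IsCircleCoeff f γ tγ n) (hdiag : tγ n n = n - ∑ i ∈ Icc 1 (n - 1), tγ n i)
    (hn : m ≤ n) {t : ℝ} (ht : 0 ≤ t) :
    dconv f (fun k => lineSum f lam γ k t) n ≤ circleSum f lam tγ n t := by
  suffices 0 ≤ circleSum f lam tγ n t - dconv f (fun k => lineSum f lam γ k t) n by linarith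
  refine nonneg_of_hasDerivAt_add_mul_nonneg (lam * n)
    (fun u => (hasDerivAt_circleSum htγ u).fun_sub
      (hasDerivAt_dconv f (fun k => hasDerivAt_lineSum γ k u) n)) ?_ (fun u hu => ?_) ht
  · simp only [circleSum_zero hdiag, lineSum_zero, hrow, hf.dconv_natCast hn]
    linarith [muF_nonneg hf.nonneg m]
  · have := dconv_nonneg (j := n) hf.nonneg fun k _ =>
      (lineSum_weight_mem_Icc hf.nonneg hlam hc hrow k hu).1
    rw [dconv_const_mul]
    linarith [mul_nonneg hlam this]

lemma circleSum_le_dconv_lineSum_add (hf : IsPMF f m) (hlam : 0 ≤ lam) (hc : IsLineCoeff f γ)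
    (hrow : ∀ j, ∑ i ∈ Icc 1 j, γ j i = j)
    (htγ : IsCircleCoeff f γ tγ n) (hdiag : tγ n n = n - ∑ i ∈ Icc 1 (n - 1), tγ n i)
    (hn : m ≤ n) {t : ℝ} (ht : 0 ≤ t) :
    circleSum f lam tγ n t ≤ dconv f (fun k => lineSum f lam γ k t) n + muF f m := by
  suffices 0 ≤ dconv f (fun k => lineSum f lam γ k t) n + muF f m - circleSum f lam tγ n t by
    linarith
  refine nonneg_of_hasDerivAt_add_mul_nonneg (lam * n)
    (fun u => ((hasDerivAt_dconv f (fun k => hasDerivAt_lineSum γ k u) n).add_const _).fun_sub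
      (hasDerivAt_circleSum htγ u)) ?_ (fun u hu => ?_) ht
  · simp only [circleSum_zero hdiag, lineSum_zero, hrow, hf.dconv_natCast hn]
    linarith
  · have hS : dconv f (fun k => lineSum f lam (weight f γ) k u) n ≤ muF f m * (n - muF f m) :=
      calc _ ≤ dconv f (fun k => muF f m * k) n :=
            dconv_mono hf.nonneg fun k _ =>
              (lineSum_weight_mem_Icc hf.nonneg hlam hc hrow k hu).2.trans (hf.muFSum_le k)
        _ = _ := by rw [dconv_const_mul, hf.dconv_natCast hn]
    rw [dconv_const_mul]
    nlinarith [mul_nonneg hlam (sq_nonneg (muF f m))]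

end Circle

section LineAverage

variable {f : ℕ → ℝ} {lam : ℝ} {c : ℕ → ℕ → ℝ} {m n : ℕ}

lemma dconv_lineSum_le (hf : IsPMF f m) (hlam : 0 ≤ lam) (hc : IsLineCoeff f c)
    (hrow : ∀ j, ∑ i ∈ Icc 1 j, c j i = j) (hn : m ≤ n) {t : ℝ} (ht : 0 ≤ t) :
    dconv f (fun k => lineSum f lam c k t) n
      ≤ lineSum f lam c (n - m) t + 2 * (m - muF f m) := by
  calc dconv f (fun k => lineSum f lam c k t) n
      = ∑ k ∈ Icc 1 m, f k * lineSum f lam c (n - k) t := hf.sum_Icc_mul_eq hn _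
    _ ≤ ∑ k ∈ Icc 1 m, (lineSum f lam c (n - m) t * f k + 2 * m * f k - 2 * (k * f k)) :=
        sum_le_sum fun k hk => by
          have hkm := (mem_Icc.mp hk).2
          have := lineSum_sub_le hf.nonneg hlam hc hrow (by omega : n - m ≤ n - k) ht
          rw [Nat.cast_sub (hkm.trans hn), Nat.cast_sub hn] at this
          nlinarith [hf.nonneg k]
    _ = _ := by
        rw [sum_sub_distrib, sum_add_distrib, ← mul_sum, ← mul_sum, ← mul_sum, hf.sum_eq_one, muF]
        ring

lemma lineSum_sub_le_dconv_lineSum (hf : IsPMF f m) (hlam : 0 ≤ lam) (hc : IsLineCoeff f c)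
    (hrow : ∀ j, ∑ i ∈ Icc 1 j, c j i = j) (hn : m ≤ n) {t : ℝ} (ht : 0 ≤ t) :
    lineSum f lam c n t - 2 * muF f m ≤ dconv f (fun k => lineSum f lam c k t) n := by
  calc lineSum f lam c n t - 2 * muF f m
      = ∑ k ∈ Icc 1 m, (lineSum f lam c n t * f k - 2 * (k * f k)) := by
        rw [sum_sub_distrib, ← mul_sum, ← mul_sum, hf.sum_eq_one, muF, mul_one]
    _ ≤ ∑ k ∈ Icc 1 m, f k * lineSum f lam c (n - k) t :=
        sum_le_sum fun k hk => by
          have hkn := (mem_Icc.mp hk).2.trans hn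
          have := lineSum_sub_le hf.nonneg hlam hc hrow (by omega : n - k ≤ n) ht
          rw [Nat.cast_sub hkn] at this
          nlinarith [hf.nonneg k]
    _ = _ := (hf.sum_Icc_mul_eq hn _).symm

end LineAverage

section Coefficients

variable {f : ℕ → ℝ} {γ : ℕ → ℕ → ℝ}

lemma isLineCoeff_of_rec (hf : ∀ k, 0 ≤ f k)
    (hγ_rec : ∀ n i : ℕ, 0 < cdfF f n → 1 ≤ i → i < n →
      γ n i = 2 * (∑ j ∈ Icc 1 (n - i), cdfF f j * γ (n - j) i) /
        (∑ k ∈ Icc (i + 1) n, cdfF f k)) :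
    IsLineCoeff f γ := by
  intro j i h1 hij
  rcases (cdfF_nonneg hf j).eq_or_lt with hzero | hpos
  · rw [cdfSum_eq_zero_of_le hf le_rfl hzero.symm, cdfSum_eq_zero_of_le hf hij hzero.symm,
      sub_self, zero_mul, sum_eq_zero fun l hl => by
        rw [cdfF_eq_zero_of_le hf (by simp only [mem_Icc] at hl; omega) hzero.symm, zero_mul],
      mul_zero]
  rcases hij.eq_or_lt with rfl | hlt
  · simp
  have hden : 0 < cdfSum f j - cdfSum f i := by
    rw [cdfSum_sub_cdfSum hlt.le]
    exact sum_pos' (fun k _ => cdfF_nonneg hf k) ⟨j, by simp only [mem_Icc]; omega, hpos⟩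
  rw [hγ_rec j i hpos h1 hlt, ← cdfSum_sub_cdfSum hlt.le, mul_div_cancel₀ _ hden.ne']

lemma sum_Icc_eq_of_diag (hf : ∀ k, 0 ≤ f k)
    (hγ_zero : ∀ n j : ℕ, cdfF f n = 0 → 1 ≤ j → j ≤ n → γ n j = 1)
    (hγ_diag : ∀ n : ℕ, 0 < cdfF f n →
      γ n n = (n : ℝ) - ∑ i ∈ Icc 1 (n - 1), γ n i) (j : ℕ) :
    ∑ i ∈ Icc 1 j, γ j i = j := by
  rcases (cdfF_nonneg hf j).eq_or_lt with hzero | hpos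
  · rw [sum_congr rfl fun i hi => hγ_zero j i hzero.symm (mem_Icc.mp hi).1 (mem_Icc.mp hi).2]
    simp
  obtain ⟨k, rfl⟩ : ∃ k, j = k + 1 :=
    Nat.exists_eq_add_one.mpr (Nat.pos_of_ne_zero fun h => by simp [h, cdfF_zero] at hpos)
  rw [sum_Icc_succ_top (by omega), hγ_diag _ hpos, Nat.add_sub_cancel]
  ring

lemma Rfun_eq_lineSum (hf : ∀ k, 0 ≤ f k)
    (hγ_zero : ∀ n j : ℕ, cdfF f n = 0 → 1 ≤ j → j ≤ n → γ n j = 1) (lam t : ℝ) (j : ℕ) :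
    Rfun f γ lam t j = lineSum f lam γ j t := by
  rw [Rfun]
  split_ifs with hpos
  · rfl
  have hzero : cdfF f j = 0 := le_antisymm (not_lt.mp hpos) (cdfF_nonneg hf j)
  rw [lineSum, sum_congr rfl fun i hi => by
    rw [hγ_zero j i hzero (mem_Icc.mp hi).1 (mem_Icc.mp hi).2,
      cdfSum_eq_zero_of_le hf (mem_Icc.mp hi).2 hzero]]
  simp

lemma isCircleCoeff_of_rec {m n : ℕ} {tγ : ℕ → ℕ → ℝ} (hf : IsPMF f m)
    (htγ_rec : ∀ n i : ℕ, m ≤ n → 1 ≤ i → i ≤ n - 1 →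
      tγ n i = (∑ k ∈ Icc 1 (n - i), f k * γ (n - k) i) /
        (1 - (1 / (n : ℝ)) * ∑ j ∈ Icc 1 i, cdfF f j))
    (hn : m ≤ n) : IsCircleCoeff f γ tγ n := by
  intro i h1 hi
  have hlt : cdfSum f i < n :=
    (hf.cdfSum_le i).trans_lt (by exact_mod_cast (by omega : i < n))
  have hn0 : (0 : ℝ) < n := (cdfSum_nonneg hf.nonneg i).trans_lt hlt
  rw [htγ_rec n i hn h1 hi]
  change _ * (_ / (1 - 1 / (n : ℝ) * cdfSum f i)) = _
  have hden : 1 - 1 / (n : ℝ) * cdfSum f i = (n - cdfSum f i) / n := by field_simp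
  rw [hden, div_div_eq_mul_div, mul_div_assoc', mul_div_cancel_left₀ _ (sub_pos.mpr hlt).ne',
    mul_comm]

end Coefficients

lemma le_mul_div_sub_add_one {μ M : ℝ} (h0 : 0 ≤ μ) (hM : μ ≤ M) :
    μ ≤ M * ((M + 1) / (M - μ + 1)) := by
  rw [mul_div_assoc', le_div_iff₀ (by linarith)]
  nlinarith

end PackagePickup

open PackagePickup

theorem stmt_17_general
    (m : ℕ) (f : ℕ → ℝ)
    (hf_nonneg : ∀ k, 0 ≤ f k)
    (hf_sum : ∑ k ∈ Finset.Icc 1 m, f k = 1)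
    (hf_supp : ∀ k : ℕ, k = 0 ∨ m < k → f k = 0)
    (lam : ℝ) (hlam : 0 < lam)
    (γ : ℕ → ℕ → ℝ)
    (hγ_zero : ∀ n j : ℕ, cdfF f n = 0 → 1 ≤ j → j ≤ n → γ n j = 1)
    (hγ_rec : ∀ n i : ℕ, 0 < cdfF f n → 1 ≤ i → i < n →
      γ n i = 2 * (∑ j ∈ Finset.Icc 1 (n - i), cdfF f j * γ (n - j) i) /
        (∑ k ∈ Finset.Icc (i + 1) n, cdfF f k))
    (hγ_diag : ∀ n : ℕ, 0 < cdfF f n →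
      γ n n = (n : ℝ) - ∑ i ∈ Finset.Icc 1 (n - 1), γ n i)
    (tγ : ℕ → ℕ → ℝ)
    (htγ_rec : ∀ n i : ℕ, m ≤ n → 1 ≤ i → i ≤ n - 1 →
      tγ n i = (∑ k ∈ Finset.Icc 1 (n - i), f k * γ (n - k) i) /
        (1 - (1 / (n : ℝ)) * ∑ j ∈ Finset.Icc 1 i, cdfF f j))
    (htγ_diag : ∀ n : ℕ, m ≤ n →
      tγ n n = (n : ℝ) - ∑ i ∈ Finset.Icc 1 (n - 1), tγ n i)
    (t : ℝ) (ht : 0 ≤ t) (n : ℕ) (hn : m ≤ n) :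
    letI κ : ℝ := ((m : ℝ) + 1) / ((m : ℝ) - muF f m + 1)
    Kfun f γ lam t (n - m) - (m : ℝ) - (m : ℝ) * κ ≤ Cfun f tγ lam t n
    ∧ Cfun f tγ lam t n ≤ muF f m + Kfun f γ lam t n + (m : ℝ) * κ := by
  have hf : IsPMF f m := ⟨hf_nonneg, hf_sum, hf_supp⟩
  have hc := isLineCoeff_of_rec hf_nonneg hγ_rec
  have hrow := sum_Icc_eq_of_diag hf_nonneg hγ_zero hγ_diag
  have hκ := le_mul_div_sub_add_one (muF_nonneg hf_nonneg m) hf.muF_le_self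
  have hWup := dconv_lineSum_le hf hlam.le hc hrow hn ht
  have hWlow := lineSum_sub_le_dconv_lineSum hf hlam.le hc hrow hn ht
  have htγ := isCircleCoeff_of_rec hf htγ_rec hn
  have hQlow := dconv_lineSum_le_circleSum hf hlam.le hc hrow htγ (htγ_diag n hn) hn ht
  have hQup := circleSum_le_dconv_lineSum_add hf hlam.le hc hrow htγ (htγ_diag n hn) hn ht
  simp only [Kfun, Rfun_eq_lineSum hf_nonneg hγ_zero, Cfun_eq, Nat.cast_sub hn]
  constructor <;> linarith [muF_nonneg hf_nonneg m]

/-- Let `κ = (m+1)/(m-μ+1)`. For every `t ≥ 0` and `n ≥ m`,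
`K(t,n-m) - m - mκ ≤ C(t,n) ≤ μ + K(t,n) + mκ`. -/
theorem stmt_17
    (m : ℕ) (hm : 1 ≤ m) (f : ℕ → ℝ)
    (hf_nonneg : ∀ k, 0 ≤ f k)
    (hf_sum : ∑ k ∈ Finset.Icc 1 m, f k = 1)
    (hf_supp : ∀ k : ℕ, k = 0 ∨ m < k → f k = 0)
    (lam : ℝ) (hlam : 0 < lam)
    (γ : ℕ → ℕ → ℝ)
    (hγ_zero : ∀ n j : ℕ, cdfF f n = 0 → 1 ≤ j → j ≤ n → γ n j = 1)
    (hγ_rec : ∀ n i : ℕ, 0 < cdfF f n → 1 ≤ i → i < n →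
      γ n i = 2 * (∑ j ∈ Finset.Icc 1 (n - i), cdfF f j * γ (n - j) i) /
        (∑ k ∈ Finset.Icc (i + 1) n, cdfF f k))
    (hγ_diag : ∀ n : ℕ, 0 < cdfF f n →
      γ n n = (n : ℝ) - ∑ i ∈ Finset.Icc 1 (n - 1), γ n i)
    (tγ : ℕ → ℕ → ℝ)
    (htγ_rec : ∀ n i : ℕ, m ≤ n → 1 ≤ i → i ≤ n - 1 →
      tγ n i = (∑ k ∈ Finset.Icc 1 (n - i), f k * γ (n - k) i) /
        (1 - (1 / (n : ℝ)) * ∑ j ∈ Finset.Icc 1 i, cdfF f j))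
    (htγ_diag : ∀ n : ℕ, m ≤ n →
      tγ n n = (n : ℝ) - ∑ i ∈ Finset.Icc 1 (n - 1), tγ n i)
    (t : ℝ) (ht : 0 ≤ t) (n : ℕ) (hn : m ≤ n) :
    letI κ : ℝ := ((m : ℝ) + 1) / ((m : ℝ) - muF f m + 1)
    Kfun f γ lam t (n - m) - (m : ℝ) - (m : ℝ) * κ ≤ Cfun f tγ lam t n
    ∧ Cfun f tγ lam t n ≤ muF f m + Kfun f γ lam t n + (m : ℝ) * κ :=
  stmt_17_general m f hf_nonneg hf_sum hf_supp lam hlam γ hγ_zero hγ_rec hγ_diag tγ htγ_rec htγ_diag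
    t ht n hn
end
end

section
/- For any points x_1, …, x_n in a metric space with distinguished depot point x₀ and any vehicle capacity V ∈ ℕ with V ≥ 1, the optimal routing lengths satisfy max{ 2 n r̄ / V, L_TSP } ≤ L_CVRP ≤ 2 (n/V + 1) r̄ + L_TSP, where r̄ = (1/n) ∑_{i=1}^n d(x_i, x₀). -/
open Finset

noncomputable section

variable {X : Type*} [MetricSpace X]

/-- Length of the path that starts at `a`, visits the points of `l` in order, and returns to
the depot `x0`. -/
def pathLen (x0 : X) : X → List X → ℝ
  | a, [] => dist a x0
  | a, b :: l => dist a b + pathLen x0 b l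

/-- Length of the closed tour starting and ending at the depot `x0` and visiting the points
of `l` in order (`0` for the empty list). -/
def tourLen (x0 : X) : List X → ℝ
  | [] => 0
  | a :: l => dist x0 a + pathLen x0 a l

/-- The traveling-salesman length: the minimum, over all orderings (permutations) of the
points of `l`, of the length of the closed tour through the depot `x0` and all the points. -/
def tspLen (x0 : X) (l : List X) : ℝ :=
  sInf { y : ℝ | ∃ p : List X, p.Perm l ∧ y = tourLen x0 p }

/-- The capacitated-vehicle-routing length: the minimum over all partitions of the points
of `l` into blocks of cardinality at most `V` of the sum over blocks of the traveling-salesman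
length of each block (each block is a closed tour through the depot `x0`). -/
def cvrpLen (x0 : X) (V : ℕ) (l : List X) : ℝ :=
  sInf { y : ℝ | ∃ P : List (List X), P.flatten.Perm l ∧ (∀ b ∈ P, b.length ≤ V) ∧
    y = (P.map (tspLen x0)).sum }

/-
Every closed tour through a point `a` has length at least `2 d(x₀, a)`, so a block of at most
`V` points costs at least `(2 / V) ∑ d(x₀, a)`; and concatenating the tours of the blocks gives a
single tour through all points, so `L_TSP ≤ L_CVRP`.

For the upper bound cut an optimal tour into consecutive blocks (iterated tour partitioning): a
first block of `j + 1` points, then blocks of `V` points. Cutting in front of a point `b` costs at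
most `2 d(x₀, b)`. As the offset `j` runs over `0, …, V - 1`, every point is a cut point at most
once, so for some offset the extra cost is at most `2 ∑ d(x₀, a) / V`.
-/

section

variable (x0 : X)

theorem tourLen_eq_pathLen : ∀ l : List X, tourLen x0 l = pathLen x0 x0 l
  | [] => (dist_self x0).symm
  | _ :: _ => rfl

theorem pathLen_nonneg (c : X) (l : List X) : 0 ≤ pathLen x0 c l := by
  induction l generalizing c with
  | nil => exact dist_nonneg
  | cons b l ih => exact add_nonneg dist_nonneg (ih b)

theorem tourLen_nonneg (l : List X) : 0 ≤ tourLen x0 l :=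
  tourLen_eq_pathLen x0 l ▸ pathLen_nonneg x0 x0 l

theorem dist_add_dist_le_pathLen {c a : X} {l : List X} (ha : a ∈ c :: l) :
    dist c a + dist a x0 ≤ pathLen x0 c l := by
  induction l generalizing c a with
  | nil =>
    obtain rfl := List.mem_singleton.1 ha
    simp [pathLen]
  | cons b l ih =>
    have hb := ih (c := b) (a := b) List.mem_cons_self
    rw [dist_self, zero_add] at hb
    show _ ≤ dist c b + pathLen x0 b l
    rcases List.mem_cons.1 ha with rfl | ha
    · rw [dist_self, zero_add]
      linarith [dist_triangle a b x0]
    · linarith [ih ha, dist_triangle c b a]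

theorem two_mul_dist_le_tourLen {a : X} {p : List X} (ha : a ∈ p) :
    2 * dist x0 a ≤ tourLen x0 p := by
  have := dist_add_dist_le_pathLen x0 (List.mem_cons_of_mem x0 ha)
  rw [tourLen_eq_pathLen, dist_comm a x0] at *
  linarith

theorem pathLen_append_le (c : X) (l₁ l₂ : List X) :
    pathLen x0 c (l₁ ++ l₂) ≤ pathLen x0 c l₁ + pathLen x0 x0 l₂ := by
  induction l₁ generalizing c with
  | nil =>
    cases l₂ with
    | nil => simp [pathLen]
    | cons b l₂ =>
      show dist c b + pathLen x0 b l₂ ≤ dist c x0 + (dist x0 b + pathLen x0 b l₂)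
      linarith [dist_triangle c x0 b]
  | cons a l₁ ih =>
    show dist c a + pathLen x0 a (l₁ ++ l₂) ≤ dist c a + pathLen x0 a l₁ + _
    linarith [ih a]

def headDist (x0 : X) : List X → ℝ
  | [] => 0
  | a :: _ => dist x0 a

theorem headDist_nonneg : ∀ l : List X, 0 ≤ headDist x0 l
  | [] => le_rfl
  | _ :: _ => dist_nonneg

theorem headDist_take {s : ℕ} (hs : s ≠ 0) (l : List X) :
    headDist x0 (l.take s) = headDist x0 l := by
  obtain ⟨s, rfl⟩ := Nat.exists_eq_succ_of_ne_zero hs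
  cases l <;> rfl

-- Cutting the route in front of the first point `b` of `l₂` adds the legs `last → x0 → b` and
-- removes `last → b`, a net cost of at most `2 * dist x0 b`.
theorem pathLen_add_pathLen_le (c : X) (l₁ l₂ : List X) :
    pathLen x0 c l₁ + pathLen x0 x0 l₂ ≤ pathLen x0 c (l₁ ++ l₂) + 2 * headDist x0 l₂ := by
  induction l₁ generalizing c with
  | nil =>
    cases l₂ with
    | nil => simp [pathLen, headDist]
    | cons b l₂ =>
      show dist c x0 + (dist x0 b + pathLen x0 b l₂) ≤ dist c b + pathLen x0 b l₂ + 2 * dist x0 b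
      linarith [dist_triangle c b x0, dist_comm b x0]
  | cons a l₁ ih =>
    show dist c a + pathLen x0 a l₁ + _ ≤ dist c a + pathLen x0 a (l₁ ++ l₂) + _
    linarith [ih a]

theorem tourLen_append_le (l₁ l₂ : List X) :
    tourLen x0 (l₁ ++ l₂) ≤ tourLen x0 l₁ + tourLen x0 l₂ := by
  simpa only [tourLen_eq_pathLen] using pathLen_append_le x0 x0 l₁ l₂

theorem tourLen_add_tourLen_le (l₁ l₂ : List X) :
    tourLen x0 l₁ + tourLen x0 l₂ + 2 * headDist x0 (l₁ ++ l₂) ≤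
      tourLen x0 (l₁ ++ l₂) + 2 * headDist x0 l₁ + 2 * headDist x0 l₂ := by
  cases l₁ with
  | nil => simp [tourLen, headDist]
  | cons a l₁ =>
    have := pathLen_add_pathLen_le x0 x0 (a :: l₁) l₂
    have hhead : headDist x0 (a :: l₁ ++ l₂) = headDist x0 (a :: l₁) := rfl
    simp only [← tourLen_eq_pathLen] at this
    linarith

theorem tourLen_flatten_le : ∀ Q : List (List X), tourLen x0 Q.flatten ≤ (Q.map (tourLen x0)).sum
  | [] => le_rfl
  | b :: Q => by
    simp only [List.flatten_cons, List.map_cons, List.sum_cons]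
    linarith [tourLen_append_le x0 b Q.flatten, tourLen_flatten_le Q]

theorem sum_tourLen_add_headDist_le : ∀ P : List (List X),
    (P.map (tourLen x0)).sum + 2 * headDist x0 P.flatten ≤
      tourLen x0 P.flatten + 2 * (P.map (headDist x0)).sum
  | [] => by simp [tourLen, headDist]
  | b :: P => by
    simp only [List.flatten_cons, List.map_cons, List.sum_cons]
    linarith [tourLen_add_tourLen_le x0 b P.flatten, sum_tourLen_add_headDist_le P]

def depotDistSum (x0 : X) (l : List X) : ℝ := (l.map (dist x0)).sum

theorem depotDistSum_cons (a : X) (l : List X) :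
    depotDistSum x0 (a :: l) = dist x0 a + depotDistSum x0 l :=
  List.sum_cons

theorem depotDistSum_nonneg (l : List X) : 0 ≤ depotDistSum x0 l :=
  List.sum_nonneg (by simp)

theorem List.Perm.depotDistSum_eq {x0 : X} {l₁ l₂ : List X} (h : l₁.Perm l₂) :
    depotDistSum x0 l₁ = depotDistSum x0 l₂ :=
  (h.map _).sum_eq

theorem depotDistSum_flatten (P : List (List X)) :
    depotDistSum x0 P.flatten = (P.map (depotDistSum x0)).sum := by
  simp only [depotDistSum, List.map_flatten, List.sum_flatten, List.map_map, Function.comp_def]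
  rfl

theorem two_mul_depotDistSum_le_length_mul_tourLen (p : List X) :
    2 * depotDistSum x0 p ≤ p.length * tourLen x0 p := by
  have h := List.sum_le_card_nsmul (p.map fun a => 2 * dist x0 a) (tourLen x0 p) (by
    simp only [List.mem_map, forall_exists_index, and_imp]
    rintro _ a ha rfl
    exact two_mul_dist_le_tourLen x0 ha)
  simpa [depotDistSum, List.sum_map_mul_left] using h

theorem sum_headDist_drop_le : ∀ (l : List X) (M : ℕ),
    ∑ k ∈ range M, headDist x0 (l.drop k) ≤ depotDistSum x0 l
  | [], M => by simp [headDist, depotDistSum]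
  | a :: l, 0 => by simpa using depotDistSum_nonneg x0 (a :: l)
  | a :: l, M + 1 => by
    rw [sum_range_succ', depotDistSum_cons]
    simp only [List.drop_succ_cons, List.drop_zero]
    linarith [sum_headDist_drop_le l M, show headDist x0 (a :: l) = dist x0 a from rfl]

theorem sum_range_sum_range_mul_add {M : Type*} [AddCommMonoid M] (f : ℕ → M) (V : ℕ) :
    ∀ K : ℕ, ∑ t ∈ range K, ∑ j ∈ range V, f (t * V + j) = ∑ k ∈ range (K * V), f k
  | 0 => by simp
  | K + 1 => by
    rw [sum_range_succ, sum_range_sum_range_mul_add f V K, Nat.succ_mul, sum_range_add]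

theorem sum_headDist_splitLengths_replicate {V : ℕ} (hV : 0 < V) : ∀ (K : ℕ) (m : List X),
    (((List.replicate K V).splitLengths m).map (headDist x0)).sum =
      ∑ t ∈ range K, headDist x0 (m.drop (t * V))
  | 0, m => by simp
  | K + 1, m => by
    rw [List.replicate_succ, List.splitLengths_cons, List.map_cons, List.sum_cons,
      sum_headDist_splitLengths_replicate hV K, headDist_take x0 hV.ne', sum_range_succ']
    simp only [List.drop_drop, Nat.succ_mul, zero_mul, List.drop_zero, add_comm V]
    ring

-- Iterated tour partitioning of the route `p` with offset `j`.
def tourPartition {α : Type*} (V j : ℕ) (p : List α) : List (List α) :=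
  ((j + 1) :: List.replicate p.length V).splitLengths p

theorem flatten_tourPartition {α : Type*} {V : ℕ} (hV : 0 < V) (j : ℕ) (p : List α) :
    (tourPartition V j p).flatten = p := by
  refine List.flatten_splitLengths _ _ ?_
  simp only [List.sum_cons, List.sum_replicate, smul_eq_mul]
  nlinarith

theorem length_le_of_mem_tourPartition {α : Type*} {V j : ℕ} (hj : j < V) {p b : List α}
    (hb : b ∈ tourPartition V j p) : b.length ≤ V := by
  refine List.length_mem_splitLengths p _ V ?_ b hb
  simp only [List.mem_cons, List.mem_replicate]
  omega

theorem sum_tourLen_tourPartition_le {V : ℕ} (hV : 0 < V) (j : ℕ) (p : List X) :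
    ((tourPartition V j p).map (tourLen x0)).sum ≤
      tourLen x0 p + 2 * ∑ t ∈ range p.length, headDist x0 (p.drop (t * V + j + 1)) := by
  have hhead : ((tourPartition V j p).map (headDist x0)).sum =
      headDist x0 p + ∑ t ∈ range p.length, headDist x0 (p.drop (t * V + j + 1)) := by
    rw [tourPartition, List.splitLengths_cons, List.map_cons, List.sum_cons,
      headDist_take x0 j.succ_ne_zero, sum_headDist_splitLengths_replicate x0 hV]
    simp only [List.drop_drop, add_comm (j + 1), add_assoc]
  have h := sum_tourLen_add_headDist_le x0 (tourPartition V j p)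
  rw [flatten_tourPartition hV, hhead] at h
  linarith

theorem exists_tourPartition_le {V : ℕ} (hV : 0 < V) (p : List X) : ∃ j < V,
    ((tourPartition V j p).map (tourLen x0)).sum ≤ tourLen x0 p + 2 * depotDistSum x0 p / V := by
  set f : ℕ → ℝ := fun k => headDist x0 (p.drop (k + 1))
  -- Every point but the first is the head of a block for exactly one offset `j`.
  have hheads : ∑ j ∈ range V, ∑ t ∈ range p.length, f (t * V + j) ≤ depotDistSum x0 p := by
    rw [sum_comm, sum_range_sum_range_mul_add]
    calc ∑ k ∈ range (p.length * V), f k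
        ≤ ∑ k ∈ range (p.length * V + 1), headDist x0 (p.drop k) := by
          rw [sum_range_succ']
          linarith [headDist_nonneg x0 (p.drop 0)]
      _ ≤ depotDistSum x0 p := sum_headDist_drop_le x0 p _
  have hV' : (V : ℝ) ≠ 0 := Nat.cast_ne_zero.2 hV.ne'
  have hsum : ∑ j ∈ range V, ((tourPartition V j p).map (tourLen x0)).sum ≤
      ∑ _j ∈ range V, (tourLen x0 p + 2 * depotDistSum x0 p / V) :=
    calc ∑ j ∈ range V, ((tourPartition V j p).map (tourLen x0)).sum
        ≤ ∑ j ∈ range V, (tourLen x0 p + 2 * ∑ t ∈ range p.length, f (t * V + j)) :=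
          sum_le_sum fun j _ => sum_tourLen_tourPartition_le x0 hV j p
      _ = V * tourLen x0 p + 2 * ∑ j ∈ range V, ∑ t ∈ range p.length, f (t * V + j) := by
          rw [sum_add_distrib, ← mul_sum, sum_const, card_range, nsmul_eq_mul]
      _ ≤ V * tourLen x0 p + 2 * depotDistSum x0 p := by linarith
      _ = ∑ _j ∈ range V, (tourLen x0 p + 2 * depotDistSum x0 p / V) := by
          rw [sum_const, card_range, nsmul_eq_mul]
          field_simp
  obtain ⟨j, hj, hle⟩ := exists_le_of_sum_le (nonempty_range_iff.2 hV.ne') hsum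
  exact ⟨j, mem_range.1 hj, hle⟩

theorem tspLen_le_tourLen {p l : List X} (h : p.Perm l) : tspLen x0 l ≤ tourLen x0 p := by
  unfold tspLen
  exact csInf_le ⟨0, by rintro _ ⟨q, -, rfl⟩; exact tourLen_nonneg x0 q⟩ ⟨p, h, rfl⟩

theorem exists_perm_tourLen_eq_tspLen (l : List X) :
    ∃ p : List X, p.Perm l ∧ tourLen x0 p = tspLen x0 l := by
  have hfin : {y : ℝ | ∃ p : List X, p.Perm l ∧ y = tourLen x0 p}.Finite := by
    refine (l.permutations.map (tourLen x0)).finite_toSet.subset ?_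
    rintro _ ⟨p, hp, rfl⟩
    exact List.mem_map_of_mem (List.mem_permutations.2 hp)
  have hne : {y : ℝ | ∃ p : List X, p.Perm l ∧ y = tourLen x0 p}.Nonempty := ⟨_, l, .refl l, rfl⟩
  obtain ⟨p, hp, h⟩ := hne.csInf_mem hfin
  exact ⟨p, hp, h.symm⟩

theorem tspLen_nonneg (l : List X) : 0 ≤ tspLen x0 l := by
  obtain ⟨p, -, hp⟩ := exists_perm_tourLen_eq_tspLen x0 l
  exact hp ▸ tourLen_nonneg x0 p

theorem two_mul_depotDistSum_le_mul_tspLen {V : ℕ} {b : List X} (hb : b.length ≤ V) :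
    2 * depotDistSum x0 b ≤ V * tspLen x0 b := by
  obtain ⟨p, hp, hpb⟩ := exists_perm_tourLen_eq_tspLen x0 b
  have hlen : (p.length : ℝ) ≤ V := by exact_mod_cast hp.length_eq ▸ hb
  rw [← hp.depotDistSum_eq, ← hpb]
  nlinarith [two_mul_depotDistSum_le_length_mul_tourLen x0 p, tourLen_nonneg x0 p]

theorem exists_perm_flatten_tourLen_le : ∀ P : List (List X),
    ∃ p : List X, p.Perm P.flatten ∧ tourLen x0 p ≤ (P.map (tspLen x0)).sum
  | [] => ⟨[], .nil, le_rfl⟩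
  | b :: P => by
    obtain ⟨q, hq, hqb⟩ := exists_perm_tourLen_eq_tspLen x0 b
    obtain ⟨p, hp, hpP⟩ := exists_perm_flatten_tourLen_le P
    refine ⟨q ++ p, hq.append hp, ?_⟩
    simp only [List.map_cons, List.sum_cons]
    linarith [tourLen_append_le x0 q p]

theorem tspLen_le_sum_tspLen {P : List (List X)} {l : List X} (hP : P.flatten.Perm l) :
    tspLen x0 l ≤ (P.map (tspLen x0)).sum := by
  obtain ⟨p, hp, hpP⟩ := exists_perm_flatten_tourLen_le x0 P
  exact (tspLen_le_tourLen x0 (hp.trans hP)).trans hpP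

theorem exists_partition_sum_tspLen_le {V : ℕ} (hV : 0 < V) (l : List X) :
    ∃ P : List (List X), P.flatten.Perm l ∧ (∀ b ∈ P, b.length ≤ V) ∧
      (P.map (tspLen x0)).sum ≤ tspLen x0 l + 2 * depotDistSum x0 l / V := by
  obtain ⟨p, hp, hpl⟩ := exists_perm_tourLen_eq_tspLen x0 l
  obtain ⟨j, hj, hcost⟩ := exists_tourPartition_le x0 hV p
  refine ⟨tourPartition V j p, (flatten_tourPartition hV j p).symm ▸ hp,
    fun b hb => length_le_of_mem_tourPartition hj hb, ?_⟩
  calc ((tourPartition V j p).map (tspLen x0)).sum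
      ≤ ((tourPartition V j p).map (tourLen x0)).sum :=
        List.sum_le_sum fun b _ => tspLen_le_tourLen x0 (.refl b)
    _ ≤ tspLen x0 l + 2 * depotDistSum x0 l / V := by rwa [← hpl, ← hp.depotDistSum_eq]

theorem cvrpLen_le_tspLen_add {V : ℕ} (hV : 0 < V) (l : List X) :
    cvrpLen x0 V l ≤ tspLen x0 l + 2 * depotDistSum x0 l / V := by
  obtain ⟨P, hP, hPV, hcost⟩ := exists_partition_sum_tspLen_le x0 hV l
  have hbdd : BddBelow {y : ℝ | ∃ Q : List (List X), Q.flatten.Perm l ∧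
      (∀ b ∈ Q, b.length ≤ V) ∧ y = (Q.map (tspLen x0)).sum} := by
    refine ⟨0, ?_⟩
    rintro _ ⟨Q, -, -, rfl⟩
    exact List.sum_nonneg (by simpa using fun b _ => tspLen_nonneg x0 b)
  exact (csInf_le hbdd ⟨P, hP, hPV, rfl⟩).trans hcost

theorem le_cvrpLen {V : ℕ} (hV : 0 < V) {l : List X} {c : ℝ}
    (h : ∀ P : List (List X), P.flatten.Perm l → (∀ b ∈ P, b.length ≤ V) →
      c ≤ (P.map (tspLen x0)).sum) :
    c ≤ cvrpLen x0 V l := by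
  obtain ⟨P, hP, hPV, -⟩ := exists_partition_sum_tspLen_le x0 hV l
  exact le_csInf ⟨_, P, hP, hPV, rfl⟩ (by rintro _ ⟨Q, hQ, hQV, rfl⟩; exact h Q hQ hQV)

theorem tspLen_le_cvrpLen {V : ℕ} (hV : 0 < V) (l : List X) : tspLen x0 l ≤ cvrpLen x0 V l :=
  le_cvrpLen x0 hV fun _ hP _ => tspLen_le_sum_tspLen x0 hP

theorem two_mul_depotDistSum_div_le_cvrpLen {V : ℕ} (hV : 0 < V) (l : List X) :
    2 * depotDistSum x0 l / V ≤ cvrpLen x0 V l := by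
  refine le_cvrpLen x0 hV fun P hP hPV => ?_
  rw [div_le_iff₀' (Nat.cast_pos.2 hV), ← hP.depotDistSum_eq, depotDistSum_flatten,
    ← List.sum_map_mul_left, ← List.sum_map_mul_left]
  exact List.sum_le_sum fun b hb => two_mul_depotDistSum_le_mul_tspLen x0 (hPV b hb)

end

/-- For points `x_1, …, x_n` in a metric space with depot `x₀` and vehicle
capacity `V ≥ 1`, with `r̄ = (1/n) ∑ d(x_i, x₀)`:
`max (2 n r̄ / V) L_TSP ≤ L_CVRP ≤ 2 (n/V + 1) r̄ + L_TSP`. -/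
theorem stmt_19 {X : Type*} [MetricSpace X] (x0 : X) (n : ℕ) (hn : 1 ≤ n)
    (x : Fin n → X) (V : ℕ) (hV : 1 ≤ V) :
    letI rbar : ℝ := (1 / (n : ℝ)) * ∑ i : Fin n, dist (x i) x0
    max (2 * (n : ℝ) * rbar / (V : ℝ)) (tspLen x0 (List.ofFn x))
        ≤ cvrpLen x0 V (List.ofFn x)
    ∧ cvrpLen x0 V (List.ofFn x)
        ≤ 2 * ((n : ℝ) / (V : ℝ) + 1) * rbar + tspLen x0 (List.ofFn x) := by
  set rbar : ℝ := (1 / (n : ℝ)) * ∑ i : Fin n, dist (x i) x0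
  have hsum : depotDistSum x0 (List.ofFn x) = n * rbar := by
    have hn' : (n : ℝ) ≠ 0 := Nat.cast_ne_zero.2 (by omega)
    simp [rbar, depotDistSum, List.sum_ofFn, dist_comm x0, hn']
  have hrbar : 0 ≤ rbar := by positivity
  refine ⟨max_le ?_ (tspLen_le_cvrpLen x0 hV _), ?_⟩
  · simpa [hsum, mul_assoc] using two_mul_depotDistSum_div_le_cvrpLen x0 hV (List.ofFn x)
  · have hupper := cvrpLen_le_tspLen_add x0 hV (List.ofFn x)
    rw [hsum] at hupper
    linarith [show 2 * ((n : ℝ) / V + 1) * rbar = 2 * (n * rbar) / V + 2 * rbar by ring]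
end
end
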